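/- arXiv:2605.27405 — 9 statements merged into one kernel-verified Lean document; each statement's English description precedes it below -/
import Mathlib

section
/- Let G be a simple graph on n vertices with minimum degree d_n, and let m_G[d_n, 2n-2] denote the number of signless Laplacian eigenvalues of G (with multiplicity) lying in the interval [d_n, 2n-2]. Then m_G[d_n, 2n-2] = 1 if and only if G is the complete graph K_n. -/
open Finset
open scoped Classical

/-- The signless Laplacian matrix `Q(G) = D(G) + A(G)` of a simple graph. -/
noncomputable def sLap {V : Type*} [Fintype V] [DecidableEq V] (G : SimpleGraph V) :
    Matrix V V ℝ :=
  Matrix.diagonal (fun v => (G.degree v : ℝ)) + G.adjMatrix ℝ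

/-- Number of eigenvalues (with multiplicity) of a Hermitian matrix lying in a set. -/
noncomputable def eigCount {V : Type*} [Fintype V] [DecidableEq V]
    {M : Matrix V V ℝ} (hM : M.IsHermitian) (s : Set ℝ) : ℕ :=
  (Finset.univ.filter fun i => hM.eigenvalues i ∈ s).card

open Matrix

variable {n : ℕ} {G : SimpleGraph (Fin n)} (hQ : (sLap G).IsHermitian)

lemma repr_pt (x : Fin n → ℝ) (u : Fin n) :
    x u = ∑ i, (⇑(hQ.eigenvectorBasis i) ⬝ᵥ x) * hQ.eigenvectorBasis i u := by
  have h := hQ.eigenvectorBasis.sum_repr' (WithLp.toLp 2 x)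
  have h2 := congrFun (congrArg (fun (z : EuclideanSpace ℝ (Fin n)) => (z : Fin n → ℝ)) h) u
  simp only [WithLp.ofLp_sum, WithLp.ofLp_smul, WithLp.ofLp_toLp] at h2
  rw [← h2]
  simp [Finset.sum_apply, EuclideanSpace.inner_eq_star_dotProduct, dotProduct_comm]

lemma expand_dot (x y : Fin n → ℝ) :
    x ⬝ᵥ y = ∑ i, (⇑(hQ.eigenvectorBasis i) ⬝ᵥ x) * (⇑(hQ.eigenvectorBasis i) ⬝ᵥ y) := by
  calc x ⬝ᵥ y = ∑ u, x u * y u := rfl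
  _ = ∑ u, (∑ i, (⇑(hQ.eigenvectorBasis i) ⬝ᵥ x) * hQ.eigenvectorBasis i u) * y u := by
      simp_rw [← repr_pt hQ]
  _ = ∑ i, (⇑(hQ.eigenvectorBasis i) ⬝ᵥ x) * (⇑(hQ.eigenvectorBasis i) ⬝ᵥ y) := by
      simp_rw [Finset.sum_mul, mul_assoc]
      rw [Finset.sum_comm]
      simp [dotProduct, Finset.mul_sum]

lemma eig_dot (i : Fin n) (x : Fin n → ℝ) :
    ⇑(hQ.eigenvectorBasis i) ⬝ᵥ (sLap G *ᵥ x)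
      = hQ.eigenvalues i * (⇑(hQ.eigenvectorBasis i) ⬝ᵥ x) := by
  have hsym : (sLap G)ᵀ = sLap G := by
    have := hQ; rwa [Matrix.IsHermitian, Matrix.conjTranspose_eq_transpose_of_trivial] at this
  rw [Matrix.dotProduct_mulVec, ← Matrix.mulVec_transpose, hsym,
    show sLap G *ᵥ ⇑(hQ.eigenvectorBasis i) = hQ.eigenvalues i • ⇑(hQ.eigenvectorBasis i) from
      hQ.mulVec_eigenvectorBasis i,
    smul_dotProduct]
  rfl

lemma quad_form (x : Fin n → ℝ) :
    x ⬝ᵥ (sLap G *ᵥ x)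
      = ∑ i, hQ.eigenvalues i * (⇑(hQ.eigenvectorBasis i) ⬝ᵥ x) ^ 2 := by
  rw [expand_dot hQ x (sLap G *ᵥ x)]
  congr 1; funext i
  rw [eig_dot hQ]
  ring

lemma norm_form (x : Fin n → ℝ) :
    x ⬝ᵥ x = ∑ i, (⇑(hQ.eigenvectorBasis i) ⬝ᵥ x) ^ 2 := by
  rw [expand_dot hQ x x]
  congr 1; funext i; ring

lemma sLap_diag (k : Fin n) : sLap G k k = (G.degree k : ℝ) := by
  simp [sLap, Matrix.add_apply, Matrix.diagonal_apply_eq]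

lemma sLap_off (k j : Fin n) (h : j ≠ k) : sLap G k j = if G.Adj k j then (1:ℝ) else 0 := by
  simp [sLap, Matrix.add_apply, Matrix.diagonal_apply_ne _ (Ne.symm h)]

lemma eig_le (i : Fin n) : hQ.eigenvalues i ≤ 2 * (n : ℝ) - 2 := by
  have hspec : hQ.eigenvalues i ∈ spectrum ℝ (sLap G) := hQ.eigenvalues_mem_spectrum_real i
  have hEig : Module.End.HasEigenvalue (Matrix.toLin' (sLap G)) (hQ.eigenvalues i) := by
    rw [Module.End.hasEigenvalue_iff_mem_spectrum]
    have : spectrum ℝ (Matrix.toLin' (sLap G)) = spectrum ℝ (sLap G) :=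
      AlgEquiv.spectrum_eq (Matrix.toLinAlgEquiv (Pi.basisFun ℝ (Fin n))) (sLap G)
    rwa [this]
  obtain ⟨k, hk⟩ := eigenvalue_mem_ball hEig
  rw [Metric.mem_closedBall, Real.dist_eq] at hk
  have hsum : ∑ j ∈ univ.erase k, ‖sLap G k j‖ = (G.degree k : ℝ) := by
    have h1 : ∀ j ∈ univ.erase k, ‖sLap G k j‖ = if G.Adj k j then (1:ℝ) else 0 := by
      intro j hj
      rw [sLap_off k j (Finset.mem_erase.mp hj).1]
      by_cases h : G.Adj k j <;> simp [h]
    rw [Finset.sum_congr rfl h1, Finset.sum_erase _ (by simp [G.irrefl])]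
    simp [SimpleGraph.degree, SimpleGraph.neighborFinset_eq_filter, Finset.sum_boole]
  rw [sLap_diag, hsum] at hk
  have hd : (G.degree k : ℝ) ≤ (n : ℝ) - 1 := by
    have := G.degree_lt_card_verts k
    rw [Fintype.card_fin] at this
    have : (G.degree k : ℕ) + 1 ≤ n := this
    have := Nat.cast_le (α := ℝ) |>.mpr this
    push_cast at this
    linarith
  have habs := abs_sub_le_iff.mp hk
  linarith [habs.1]
-- appended to t1 content later
lemma neighborFinset_top (hn : 1 ≤ n) (u : Fin n) :
    (⊤ : SimpleGraph (Fin n)).neighborFinset u = univ.erase u := by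
  ext w
  simp [SimpleGraph.mem_neighborFinset, ne_comm]

lemma sLap_top_mulVec (hn : 1 ≤ n) (x : Fin n → ℝ) (u : Fin n) :
    (sLap (⊤ : SimpleGraph (Fin n)) *ᵥ x) u
      = ((n : ℝ) - 1) * x u + (∑ w, x w - x u) := by
  have hdeg : (((⊤ : SimpleGraph (Fin n)).degree u : ℕ) : ℝ) = (n : ℝ) - 1 := by
    rw [SimpleGraph.complete_graph_degree, Fintype.card_fin]
    push_cast [Nat.cast_sub hn]
    ring
  have h1 : (sLap (⊤ : SimpleGraph (Fin n)) *ᵥ x) u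
      = ((⊤ : SimpleGraph (Fin n)).degree u : ℝ) * x u
        + ∑ w ∈ (⊤ : SimpleGraph (Fin n)).neighborFinset u, x w := by
    simp only [sLap, Matrix.add_mulVec, Matrix.mulVec_diagonal,
      SimpleGraph.adjMatrix_mulVec_apply, Pi.add_apply]
    congr!
  rw [h1, hdeg, neighborFinset_top hn, Finset.sum_erase_eq_sub (mem_univ u)]

lemma minDegree_top (hn : 1 ≤ n) :
    (⊤ : SimpleGraph (Fin n)).minDegree = n - 1 := by
  have : Nonempty (Fin n) := ⟨⟨0, hn⟩⟩
  obtain ⟨v, hv⟩ := (⊤ : SimpleGraph (Fin n)).exists_minimal_degree_vertex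
  rw [hv, SimpleGraph.complete_graph_degree, Fintype.card_fin]

lemma top_direction (hn : 1 ≤ n) (hQ : (sLap (⊤ : SimpleGraph (Fin n))).IsHermitian) :
    eigCount hQ (Set.Icc (((⊤ : SimpleGraph (Fin n)).minDegree : ℝ)) (2 * n - 2)) = 1 := by
  unfold eigCount
  have hδ : (((⊤ : SimpleGraph (Fin n)).minDegree : ℕ) : ℝ) = (n : ℝ) - 1 := by
    rw [minDegree_top hn]
    push_cast [Nat.cast_sub hn]
    ring
  set f := hQ.eigenvalues with hf
  set b := hQ.eigenvectorBasis with hb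
  have hnR : (1 : ℝ) ≤ (n : ℝ) := by exact_mod_cast hn
  -- existence
  have hone : sLap (⊤ : SimpleGraph (Fin n)) *ᵥ (fun _ => (1:ℝ)) = (2 * (n:ℝ) - 2) • (fun _ => (1:ℝ)) := by
    funext u
    rw [sLap_top_mulVec hn]
    simp
    ring
  obtain ⟨i0, hi0⟩ : ∃ i, ⇑(b i) ⬝ᵥ (fun _ => (1:ℝ)) ≠ 0 := by
    by_contra hall
    push_neg at hall
    have := repr_pt hQ (fun _ => (1:ℝ)) ⟨0, hn⟩
    simp only [← hb, hall, zero_mul, Finset.sum_const_zero] at this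
    exact one_ne_zero this
  have hfi0 : f i0 = 2 * (n:ℝ) - 2 := by
    have h1 := eig_dot hQ i0 (fun _ => (1:ℝ))
    rw [hone, dotProduct_smul] at h1
    have h2 : (2*(n:ℝ)-2) * (⇑(b i0) ⬝ᵥ fun _ => (1:ℝ))
        = f i0 * (⇑(b i0) ⬝ᵥ fun _ => (1:ℝ)) := h1
    exact (mul_right_cancel₀ hi0 h2).symm
  -- uniqueness : any eigenvector with eigenvalue ≥ n-1 is constant
  have hconst : ∀ i, (n:ℝ) - 1 ≤ f i → ∀ u, b i u = b i ⟨0, hn⟩ := by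
    intro i hi u
    have key : ∀ w : Fin n, (f i - ((n:ℝ) - 2)) * b i w = ∑ t, b i t := by
      intro w
      have he := congrFun (hQ.mulVec_eigenvectorBasis i) w
      rw [sLap_top_mulVec hn] at he
      have : ((n:ℝ) - 1) * b i w + (∑ t, b i t - b i w) = f i * b i w := he
      linarith [this]
    have hpos : f i - ((n:ℝ) - 2) ≠ 0 := by linarith
    have h1 := key u
    have h2 := key ⟨0, hn⟩
    have := h1.trans h2.symm
    exact mul_left_cancel₀ hpos this
  have horth := orthonormal_iff_ite.mp hQ.eigenvectorBasis.orthonormal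
  have hcard1 : ∀ i j, f i ∈ Set.Icc ((((⊤ : SimpleGraph (Fin n)).minDegree:ℕ):ℝ)) (2*n-2) →
      f j ∈ Set.Icc ((((⊤ : SimpleGraph (Fin n)).minDegree:ℕ):ℝ)) (2*n-2) → i = j := by
    intro i j hi hj
    by_contra hij
    rw [Set.mem_Icc, hδ] at hi hj
    have hci : ∀ u, b i u = b i ⟨0, hn⟩ := hconst i hi.1
    have hcj : ∀ u, b j u = b j ⟨0, hn⟩ := hconst j hj.1
    have h0 : (inner ℝ (b i) (b j) : ℝ) = 0 := by rw [horth]; simp [hij]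
    have h1 : (inner ℝ (b i) (b i) : ℝ) = 1 := by rw [horth]; simp
    have h0' : ∑ u, b i u * b j u = 0 := by
      rw [← h0, EuclideanSpace.inner_eq_star_dotProduct]; simp [dotProduct, mul_comm]
    have h1' : ∑ u, b i u * b i u = 1 := h1
    have h1j : (inner ℝ (b j) (b j) : ℝ) = 1 := by rw [horth]; simp
    have h1j' : ∑ u, b j u * b j u = 1 := h1j
    simp only [fun u => hci u, fun u => hcj u, Finset.sum_const, card_univ,
      Fintype.card_fin, nsmul_eq_mul] at h0' h1' h1j'
    have hni : b i ⟨0, hn⟩ ≠ 0 := by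
      intro h; rw [h] at h1'; simp at h1'
    have hnj : b j ⟨0, hn⟩ ≠ 0 := by
      intro h; rw [h] at h1j'; simp at h1j'
    have : (n:ℝ) ≠ 0 := by positivity
    have := mul_ne_zero (mul_ne_zero this hni) hnj
    rw [mul_assoc] at this
    exact this h0'
  rw [Finset.card_eq_one]
  refine ⟨i0, Finset.eq_singleton_iff_unique_mem.mpr ⟨?_, ?_⟩⟩
  · simp only [Finset.mem_filter, mem_univ, true_and, Set.mem_Icc, hfi0, hδ]
    constructor <;> linarith
  · intro j hj
    simp only [Finset.mem_filter, mem_univ, true_and] at hj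
    refine hcard1 j i0 hj ?_
    simp only [Set.mem_Icc, hfi0, hδ]
    constructor <;> linarith

lemma complete_of_card_one (hn : 1 ≤ n) (G : SimpleGraph (Fin n))
    (hQ : (sLap G).IsHermitian)
    (h1 : eigCount hQ (Set.Icc ((G.minDegree : ℝ)) (2 * n - 2)) = 1) :
    G = ⊤ := by
  unfold eigCount at h1
  by_contra hne
  obtain ⟨u, v, huv, hnadj⟩ : ∃ u v, u ≠ v ∧ ¬ G.Adj u v := by
    by_contra hall
    push_neg at hall
    apply hne
    ext a c
    simp only [SimpleGraph.top_adj]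
    exact ⟨fun h => h.ne, fun h => hall a c h⟩
  obtain ⟨i0, hs⟩ := Finset.card_eq_one.mp h1
  have hi0mem : hQ.eigenvalues i0 ∈ Set.Icc ((G.minDegree : ℝ)) (2 * n - 2) := by
    have h : i0 ∈ ({i0} : Finset (Fin n)) := Finset.mem_singleton_self i0
    rw [← hs] at h
    simp only [Finset.mem_filter] at h
    exact h.2
  have hlt : ∀ j, j ≠ i0 → hQ.eigenvalues j < (G.minDegree : ℝ) := by
    intro j hj
    by_contra hge
    push_neg at hge
    have hmem : j ∈ ({i0} : Finset (Fin n)) := by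
      rw [← hs]
      simp only [Finset.mem_filter, mem_univ, true_and, Set.mem_Icc]
      exact ⟨hge, eig_le hQ j⟩
    exact hj (Finset.mem_singleton.mp hmem)
  obtain ⟨a, c, hac, hzero⟩ : ∃ a c : ℝ, ¬(a = 0 ∧ c = 0) ∧
      a * hQ.eigenvectorBasis i0 u + c * hQ.eigenvectorBasis i0 v = 0 := by
    by_cases hz : hQ.eigenvectorBasis i0 u = 0 ∧ hQ.eigenvectorBasis i0 v = 0
    · exact ⟨1, 0, by simp, by simp [hz.1, hz.2]⟩
    · refine ⟨hQ.eigenvectorBasis i0 v, -(hQ.eigenvectorBasis i0 u), ?_, by ring⟩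
      rintro ⟨h1', h2'⟩
      exact hz ⟨neg_eq_zero.mp h2', h1'⟩
  set x : Fin n → ℝ := (a • (Pi.single u (1:ℝ) : Fin n → ℝ)) + (c • (Pi.single v (1:ℝ) : Fin n → ℝ)) with hx
  have hdot0 : ⇑(hQ.eigenvectorBasis i0) ⬝ᵥ x = 0 := by
    have e1 : ⇑(hQ.eigenvectorBasis i0) ⬝ᵥ x
        = a * hQ.eigenvectorBasis i0 u + c * hQ.eigenvectorBasis i0 v := by
      rw [hx]
      simp only [dotProduct_add, dotProduct_smul, dotProduct_single,
        smul_eq_mul, mul_one]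
    rw [e1]
    linarith [hzero]
  have hxx : x ⬝ᵥ x = a ^ 2 + c ^ 2 := by
    rw [hx]
    simp only [add_dotProduct, smul_dotProduct, dotProduct_add,
      dotProduct_smul, dotProduct_single, single_dotProduct,
      smul_eq_mul, mul_one, Pi.single_apply]
    simp [huv, huv.symm]
    ring
  have hQuv : sLap G u v = 0 := by
    rw [sLap_off u v huv.symm]; simp [hnadj]
  have hQvu : sLap G v u = 0 := by
    rw [sLap_off v u huv]
    have : ¬ G.Adj v u := fun h => hnadj h.symm
    simp [this]
  have hQx : x ⬝ᵥ (sLap G *ᵥ x)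
      = a ^ 2 * (G.degree u : ℝ) + c ^ 2 * (G.degree v : ℝ) := by
    rw [hx]
    simp only [Matrix.mulVec_add, Matrix.mulVec_smul, Matrix.mulVec_single_one, mul_one,
      dotProduct_add, dotProduct_smul, add_dotProduct,
      smul_dotProduct, single_dotProduct, smul_eq_mul, one_mul, Matrix.col_apply]
    rw [sLap_diag, sLap_diag, hQuv, hQvu]
    ring
  have hδu : (G.minDegree : ℝ) ≤ (G.degree u : ℝ) := by
    exact_mod_cast G.minDegree_le_degree u
  have hδv : (G.minDegree : ℝ) ≤ (G.degree v : ℝ) := by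
    exact_mod_cast G.minDegree_le_degree v
  have hge : (G.minDegree : ℝ) * (x ⬝ᵥ x) ≤ x ⬝ᵥ (sLap G *ᵥ x) := by
    rw [hxx, hQx]
    nlinarith [sq_nonneg a, sq_nonneg c]
  have hxxpos : 0 < x ⬝ᵥ x := by
    rw [hxx]
    rcases not_and_or.mp hac with h | h
    · have : 0 < a ^ 2 := lt_of_le_of_ne (sq_nonneg a) (Ne.symm (pow_ne_zero 2 h))
      nlinarith [sq_nonneg c]
    · have : 0 < c ^ 2 := lt_of_le_of_ne (sq_nonneg c) (Ne.symm (pow_ne_zero 2 h))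
      nlinarith [sq_nonneg a]
  obtain ⟨j, hj⟩ : ∃ j, ⇑(hQ.eigenvectorBasis j) ⬝ᵥ x ≠ 0 := by
    by_contra hall
    push_neg at hall
    rw [norm_form hQ x] at hxxpos
    simp [hall] at hxxpos
  have hji0 : j ≠ i0 := by
    intro h; rw [h, hdot0] at hj; exact hj rfl
  have hstrict : x ⬝ᵥ (sLap G *ᵥ x) < (G.minDegree : ℝ) * (x ⬝ᵥ x) := by
    rw [quad_form hQ x, norm_form hQ x, Finset.mul_sum]
    apply Finset.sum_lt_sum
    · intro i _
      by_cases hi : i = i0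
      · rw [hi, hdot0]; simp
      · exact mul_le_mul_of_nonneg_right (le_of_lt (hlt i hi)) (sq_nonneg _)
    · refine ⟨j, mem_univ j, ?_⟩
      have hcj : 0 < (⇑(hQ.eigenvectorBasis j) ⬝ᵥ x) ^ 2 :=
        lt_of_le_of_ne (sq_nonneg _) (Ne.symm (pow_ne_zero 2 hj))
      exact mul_lt_mul_of_pos_right (hlt j hji0) hcj
  linarith

theorem stmt3 {n : ℕ} (hn : 1 ≤ n) (G : SimpleGraph (Fin n))
    (hQ : (sLap G).IsHermitian) :
    eigCount hQ (Set.Icc (G.minDegree : ℝ) (2 * n - 2)) = 1 ↔ G = ⊤ := by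
  constructor
  · intro h1
    exact complete_of_card_one hn G hQ h1
  · rintro rfl
    have e : ∀ (i1 i2 : DecidableRel ((⊤ : SimpleGraph (Fin n)).Adj)),
        @SimpleGraph.minDegree (Fin n) ⊤ _ i1 = @SimpleGraph.minDegree (Fin n) ⊤ _ i2 :=
      fun i1 i2 => by congr!
    rw [e _ (inferInstance : DecidableRel ((⊤ : SimpleGraph (Fin n)).Adj))]
    exact top_direction hn hQ
end

section
/- For any simple graph G on n vertices, the independence number α(G) satisfies α(G) ≤ m_G[d_n, 2n-2], where m_G[d_n, 2n-2] is the number of signless Laplacian eigenvalues of G lying in [d_n, 2n-2] and d_n is the minimum degree. -/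
open Finset
open scoped Classical
open Matrix

open Matrix in
lemma aux_card_le {n : ℕ} {M : Matrix (Fin n) (Fin n) ℝ} (hM : M.IsHermitian)
    (a : ℝ) (S : Finset (Fin n))
    (hpos : ∀ x : Fin n → ℝ, (∀ v, v ∉ S → x v = 0) →
      a * (x ⬝ᵥ x) ≤ x ⬝ᵥ (M *ᵥ x)) :
    S.card ≤ (Finset.univ.filter fun i => a ≤ hM.eigenvalues i).card := by
  classical
  set b := hM.eigenvectorBasis with hb
  set Gd := (Finset.univ.filter fun i => a ≤ hM.eigenvalues i) with hGd
  have hMT : Mᵀ = M := by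
    have h := hM; simp [Matrix.conjTranspose_eq_transpose_of_trivial] at h; exact h
  -- the extension map
  let e : (↥S → ℝ) → (Fin n → ℝ) := fun c v => if h : v ∈ S then c ⟨v, h⟩ else 0
  have e_add : ∀ c d, e (c + d) = e c + e d := by
    intro c d; funext v; by_cases h : v ∈ S <;> simp [e, h]
  have e_smul : ∀ (r : ℝ) c, e (r • c) = r • e c := by
    intro r c; funext v; by_cases h : v ∈ S <;> simp [e, h]
  let φ : (↥S → ℝ) →ₗ[ℝ] (↥Gd → ℝ) :=
    { toFun := fun c i => (⇑(b i) : Fin n → ℝ) ⬝ᵥ e c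
      map_add' := by intro c d; funext i; simp [e_add]
      map_smul' := by intro r c; funext i; simp [e_smul] }
  -- key: eigen-coordinate identities
  have key : ∀ x : Fin n → ℝ, ∀ i : Fin n,
      (⇑(b i) : Fin n → ℝ) ⬝ᵥ (M *ᵥ x) = hM.eigenvalues i * ((⇑(b i) : Fin n → ℝ) ⬝ᵥ x) := by
    intro x i
    have h1 : (⇑(b i) : Fin n → ℝ) ⬝ᵥ (M *ᵥ x) = (M *ᵥ ⇑(b i)) ⬝ᵥ x := by
      rw [Matrix.dotProduct_mulVec, ← Matrix.mulVec_transpose, hMT]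
    rw [h1, hb, hM.mulVec_eigenvectorBasis, smul_dotProduct, smul_eq_mul]
  have inner_eq : ∀ x y : EuclideanSpace ℝ (Fin n),
      (inner ℝ x y : ℝ) = (⇑x : Fin n → ℝ) ⬝ᵥ ⇑y := by
    intro x y; simp [PiLp.inner_apply, dotProduct, mul_comm]
  have parseval : ∀ x : EuclideanSpace ℝ (Fin n), ∀ y : EuclideanSpace ℝ (Fin n),
      (⇑x : Fin n → ℝ) ⬝ᵥ ⇑y = ∑ i, ((⇑(b i) : Fin n → ℝ) ⬝ᵥ x) * ((⇑(b i) : Fin n → ℝ) ⬝ᵥ y) := by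
    intro x y
    rw [← inner_eq x y, ← b.sum_inner_mul_inner x y]
    refine Finset.sum_congr rfl fun i _ => ?_
    rw [inner_eq, inner_eq, dotProduct_comm]
  -- injectivity of φ
  have hinj : Function.Injective φ := by
    rw [← LinearMap.ker_eq_bot, LinearMap.ker_eq_bot']
    intro c hc
    by_contra hcne
    set x : Fin n → ℝ := e c with hx
    have hxsupp : ∀ v, v ∉ S → x v = 0 := fun v hv => dif_neg hv
    have hxne : x ≠ 0 := by
      intro h0
      apply hcne
      funext v
      have := congrFun h0 v.1
      simpa [hx, e, v.2] using this
    set ci : Fin n → ℝ := fun i => (⇑(b i) : Fin n → ℝ) ⬝ᵥ x with hci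
    have hciG : ∀ i ∈ Gd, ci i = 0 := by
      intro i hi
      have := congrFun hc ⟨i, hi⟩
      simpa [φ, hci, hx] using this
    have P1 : x ⬝ᵥ x = ∑ i, ci i ^ 2 := by
      have := parseval (WithLp.toLp 2 x) (WithLp.toLp 2 x)
      simpa [hci, sq] using this
    have P2 : x ⬝ᵥ (M *ᵥ x) = ∑ i, hM.eigenvalues i * ci i ^ 2 := by
      refine Eq.trans (parseval (WithLp.toLp 2 x) (WithLp.toLp 2 (M *ᵥ x))) ?_
      refine Finset.sum_congr rfl fun i _ => ?_
      simp only [WithLp.ofLp_toLp]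
      rw [key x i, hci]; ring
    have hxx : (0:ℝ) < x ⬝ᵥ x := by
      have h1 : (0:ℝ) ≤ x ⬝ᵥ x := Finset.sum_nonneg fun i _ => mul_self_nonneg _
      rcases lt_or_eq_of_le h1 with h | h
      · exact h
      · exact absurd (dotProduct_self_eq_zero.mp h.symm) hxne
    have hex : ∃ i, ci i ≠ 0 := by
      by_contra hall
      push_neg at hall
      rw [P1] at hxx
      simp [hall] at hxx
    obtain ⟨i0, hi0⟩ := hex
    have hi0G : i0 ∉ Gd := fun h => hi0 (hciG i0 h)
    have hlam : hM.eigenvalues i0 < a := by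
      by_contra h
      push_neg at h
      exact hi0G (Finset.mem_filter.mpr ⟨Finset.mem_univ _, h⟩)
    have hlt : ∑ i, hM.eigenvalues i * ci i ^ 2 < ∑ i, a * ci i ^ 2 := by
      apply Finset.sum_lt_sum
      · intro i _
        by_cases hi : i ∈ Gd
        · simp [hciG i hi]
        · have : hM.eigenvalues i < a := by
            by_contra h
            push_neg at h
            exact hi (Finset.mem_filter.mpr ⟨Finset.mem_univ _, h⟩)
          nlinarith [sq_nonneg (ci i)]
      · exact ⟨i0, Finset.mem_univ i0,
          mul_lt_mul_of_pos_right hlam (by positivity)⟩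
    have hle := hpos x hxsupp
    rw [P1, P2] at hle
    rw [← Finset.mul_sum] at hlt
    linarith
  have hcard := LinearMap.finrank_le_finrank_of_injective hinj
  rwa [Module.finrank_pi, Module.finrank_pi, Fintype.card_coe, Fintype.card_coe] at hcard

open Matrix in
lemma sLap_quad {n : ℕ} (G : SimpleGraph (Fin n)) (x : Fin n → ℝ) :
    x ⬝ᵥ (sLap G *ᵥ x) =
      ∑ v, (G.degree v : ℝ) * x v ^ 2 + ∑ v, x v * ∑ u ∈ G.neighborFinset v, x u := by
  classical
  simp only [sLap, Matrix.add_mulVec, dotProduct_add]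
  congr 1
  · simp only [dotProduct, Matrix.mulVec_diagonal]
    refine Finset.sum_congr rfl fun v _ => ?_
    ring
  · simp only [dotProduct, SimpleGraph.adjMatrix_mulVec_apply]

open Matrix in
lemma swap_sum {n : ℕ} (G : SimpleGraph (Fin n)) (f : Fin n → ℝ) :
    ∑ v, ∑ u ∈ G.neighborFinset v, f u = ∑ u, (G.degree u : ℝ) * f u := by
  classical
  have h : ∀ v, ∑ u ∈ G.neighborFinset v, f u = ∑ u, if G.Adj v u then f u else 0 := by
    intro v; rw [SimpleGraph.neighborFinset_eq_filter, Finset.sum_filter]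
  simp only [h]
  rw [Finset.sum_comm]
  refine Finset.sum_congr rfl fun u _ => ?_
  rw [← Finset.sum_filter]
  have h2 : (Finset.univ.filter fun v => G.Adj v u) = G.neighborFinset u := by
    rw [SimpleGraph.neighborFinset_eq_filter]
    ext v; simp [G.adj_comm]
  rw [h2, Finset.sum_const, SimpleGraph.card_neighborFinset_eq_degree]
  simp [mul_comm]

theorem stmt4 {n : ℕ} (G : SimpleGraph (Fin n)) (hQ : (sLap G).IsHermitian)
    (S : Finset (Fin n)) (hS : ∀ a ∈ S, ∀ b ∈ S, ¬ G.Adj a b) :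
    S.card ≤ eigCount hQ (Set.Icc (G.minDegree : ℝ) (2 * n - 2)) := by
  classical
  -- Step 1: lower bound on the quadratic form for vectors supported on S
  have hpos : ∀ x : Fin n → ℝ, (∀ v, v ∉ S → x v = 0) →
      (G.minDegree : ℝ) * (x ⬝ᵥ x) ≤ x ⬝ᵥ (sLap G *ᵥ x) := by
    intro x hx
    rw [sLap_quad]
    have hzero : ∑ v, x v * ∑ u ∈ G.neighborFinset v, x u = 0 := by
      refine Finset.sum_eq_zero fun v _ => ?_
      by_cases hv : x v = 0
      · simp [hv]
      · have hvS : v ∈ S := by by_contra h; exact hv (hx v h)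
        have : ∑ u ∈ G.neighborFinset v, x u = 0 := by
          refine Finset.sum_eq_zero fun u hu => ?_
          by_contra hu0
          have huS : u ∈ S := by by_contra h; exact hu0 (hx u h)
          exact hS v hvS u huS ((SimpleGraph.mem_neighborFinset _ _ _).mp hu)
        simp [this]
    rw [hzero, add_zero]
    have hdot : x ⬝ᵥ x = ∑ v, x v ^ 2 := by
      simp [dotProduct, sq]
    rw [hdot, Finset.mul_sum]
    refine Finset.sum_le_sum fun v _ => ?_
    have : (G.minDegree : ℝ) ≤ (G.degree v : ℝ) := by
      exact_mod_cast G.minDegree_le_degree v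
    nlinarith [sq_nonneg (x v)]
  -- Step 2: all eigenvalues are at most 2n - 2
  have hub : ∀ i, hQ.eigenvalues i ≤ 2 * (n : ℝ) - 2 := by
    intro i
    set v : Fin n → ℝ := ⇑(hQ.eigenvectorBasis i) with hv
    have hnorm : v ⬝ᵥ v = 1 := by
      have h1 : (inner ℝ (hQ.eigenvectorBasis i) (hQ.eigenvectorBasis i) : ℝ) = 1 := by
        rw [real_inner_self_eq_norm_sq, hQ.eigenvectorBasis.orthonormal.1 i]
        norm_num
      rw [← h1]
      simp only [PiLp.inner_apply, RCLike.inner_apply, conj_trivial, dotProduct]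
      exact rfl
    have heig : v ⬝ᵥ (sLap G *ᵥ v) = hQ.eigenvalues i := by
      rw [hv, hQ.mulVec_eigenvectorBasis, dotProduct_smul, ← hv, smul_eq_mul, hnorm,
        mul_one]
    rw [← heig, sLap_quad]
    have hdegle : ∀ u : Fin n, (G.degree u : ℝ) ≤ (n : ℝ) - 1 := by
      intro u
      have h := G.degree_lt_card_verts u
      rw [Fintype.card_fin] at h
      have : (G.degree u : ℝ) + 1 ≤ (n : ℝ) := by exact_mod_cast h
      linarith
    have hcross : ∑ w, v w * ∑ u ∈ G.neighborFinset w, v u ≤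
        ∑ w, (G.degree w : ℝ) * v w ^ 2 := by
      have h1 : ∀ w : Fin n, v w * ∑ u ∈ G.neighborFinset w, v u ≤
          (G.degree w : ℝ) * (v w ^ 2 / 2) + ∑ u ∈ G.neighborFinset w, v u ^ 2 / 2 := by
        intro w
        rw [Finset.mul_sum]
        calc ∑ u ∈ G.neighborFinset w, v w * v u
            ≤ ∑ u ∈ G.neighborFinset w, (v w ^ 2 / 2 + v u ^ 2 / 2) :=
              Finset.sum_le_sum fun u _ => by nlinarith [sq_nonneg (v w - v u)]
          _ = (G.degree w : ℝ) * (v w ^ 2 / 2) + ∑ u ∈ G.neighborFinset w, v u ^ 2 / 2 := by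
              rw [Finset.sum_add_distrib, Finset.sum_const,
                SimpleGraph.card_neighborFinset_eq_degree, nsmul_eq_mul]
      calc ∑ w, v w * ∑ u ∈ G.neighborFinset w, v u
          ≤ ∑ w, ((G.degree w : ℝ) * (v w ^ 2 / 2) + ∑ u ∈ G.neighborFinset w, v u ^ 2 / 2) :=
            Finset.sum_le_sum fun w _ => h1 w
        _ = ∑ w, (G.degree w : ℝ) * (v w ^ 2 / 2) + ∑ w, ∑ u ∈ G.neighborFinset w, v u ^ 2 / 2 :=
            Finset.sum_add_distrib
        _ = ∑ w, (G.degree w : ℝ) * (v w ^ 2 / 2) + ∑ u, (G.degree u : ℝ) * (v u ^ 2 / 2) := by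
            rw [swap_sum G (fun u => v u ^ 2 / 2)]
        _ = ∑ w, (G.degree w : ℝ) * v w ^ 2 := by
            rw [← Finset.sum_add_distrib]
            exact Finset.sum_congr rfl fun w _ => by ring
    have hdsum : ∑ w, (G.degree w : ℝ) * v w ^ 2 ≤ ((n : ℝ) - 1) * 1 := by
      calc ∑ w, (G.degree w : ℝ) * v w ^ 2 ≤ ∑ w, ((n : ℝ) - 1) * v w ^ 2 :=
            Finset.sum_le_sum fun w _ => by nlinarith [sq_nonneg (v w), hdegle w]
        _ = ((n : ℝ) - 1) * (v ⬝ᵥ v) := by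
            rw [← Finset.mul_sum]
            congr 1
            simp [dotProduct, sq]
        _ = ((n : ℝ) - 1) * 1 := by rw [hnorm]
    linarith
  -- Step 3: combine
  have h1 := aux_card_le hQ (G.minDegree : ℝ) S hpos
  refine h1.trans (Finset.card_le_card fun i hi => ?_)
  simp only [Finset.mem_filter, Set.mem_Icc] at hi ⊢
  exact ⟨hi.1, hi.2, hub i⟩
end

section
/- For any simple graph G on n vertices with maximum degree d_1, the independence number α(G) satisfies α(G) ≤ m_G[0, d_1], the number of signless Laplacian eigenvalues of G in the interval [0, d_1]. -/
open Finset
open scoped Classical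

/-! If `x` is supported on an independent set `S`, the adjacency part of `xᵀ Q x` vanishes, so
`xᵀ Q x = ∑ d(u) x_u² ≤ d₁ ‖x‖²`. A subspace on which the Rayleigh quotient is at most `c` meets
the span of the eigenvectors with eigenvalue `> c` trivially, so its dimension `|S|` is at most the
number of eigenvalues `≤ d₁`. These all lie in `[0, d₁]` because `Q = N Nᵀ` for the vertex-edge
incidence matrix `N`. -/

open Matrix
open scoped RealInnerProductSpace

theorem LinearMap.IsSymmetric.finrank_le_card_eigenvalues_le {E ι : Type*}
    [NormedAddCommGroup E] [InnerProductSpace ℝ E] [Fintype ι] {T : E →ₗ[ℝ] E}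
    (hT : T.IsSymmetric) (b : OrthonormalBasis ι ℝ E) (μ : ι → ℝ)
    (hb : ∀ i, T (b i) = μ i • b i) {c : ℝ} (U : Submodule ℝ E)
    (hU : ∀ x ∈ U, ⟪x, T x⟫ ≤ c * ‖x‖ ^ 2) :
    Module.finrank ℝ U ≤ #{i | μ i ≤ c} := by
  have hquad (x : E) : ⟪x, T x⟫ = ∑ i, μ i * ⟪b i, x⟫ ^ 2 := by
    rw [← b.sum_inner_mul_inner]
    refine sum_congr rfl fun i _ => ?_
    rw [← hT, hb, real_inner_smul_left, real_inner_comm]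
    ring
  -- A vector of `U` whose coordinates along the eigenvectors with `μ i ≤ c` vanish has
  -- Rayleigh quotient `> c` unless it is zero.
  let f : E →ₗ[ℝ] {i // μ i ≤ c} → ℝ := LinearMap.pi fun i => innerₛₗ ℝ (b i)
  have hf : Function.Injective (f.domRestrict U) := by
    rw [← LinearMap.ker_eq_bot, LinearMap.ker_eq_bot']
    rintro ⟨x, hxU⟩ hfx
    have hlow (i : ι) : ⟪b i, x⟫ = 0 ∨ c < μ i := by
      by_cases hi : μ i ≤ c
      · exact .inl (congrFun hfx ⟨i, hi⟩)
      · exact .inr (not_le.mp hi)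
    have hterm (i : ι) : 0 ≤ (μ i - c) * ⟪b i, x⟫ ^ 2 := by
      rcases hlow i with h | h
      · simp [h]
      · exact mul_nonneg (sub_nonneg.mpr h.le) (sq_nonneg _)
    have hsum : ∑ i, (μ i - c) * ⟪b i, x⟫ ^ 2 ≤ 0 := by
      have := hU x hxU
      rw [hquad, ← b.sum_sq_inner_right, mul_sum] at this
      simpa [sub_mul] using this
    have hcoord (i : ι) : ⟪b i, x⟫ = 0 := by
      have := (sum_eq_zero_iff_of_nonneg fun i _ => hterm i).mp
        (le_antisymm hsum (sum_nonneg fun i _ => hterm i)) i (mem_univ i)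
      rcases hlow i with h | h
      · exact h
      · simpa [(sub_pos.mpr h).ne'] using this
    rw [Submodule.mk_eq_zero, ← b.sum_repr' x]
    simp [hcoord]
  calc Module.finrank ℝ U ≤ Module.finrank ℝ ({i // μ i ≤ c} → ℝ) :=
        LinearMap.finrank_le_finrank_of_injective hf
    _ = #{i | μ i ≤ c} := by simp [Fintype.card_subtype]

theorem Module.Basis.finrank_span_image {ι R M : Type*} [Ring R] [Nontrivial R]
    [StrongRankCondition R] [AddCommGroup M] [Module R M] (b : Basis ι R M) (s : Finset ι) :
    Module.finrank R (Submodule.span R (b '' s)) = #s := by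
  rw [Set.image_eq_range]
  exact (finrank_span_eq_card (b.linearIndependent.comp _ Subtype.val_injective)).trans
    (Fintype.card_coe s)

theorem Matrix.IsHermitian.toEuclideanLin_eigenvectorBasis {ι : Type*} [Fintype ι]
    [DecidableEq ι] {A : Matrix ι ι ℝ} (hA : A.IsHermitian) (i : ι) :
    toEuclideanLin A (hA.eigenvectorBasis i) = hA.eigenvalues i • hA.eigenvectorBasis i := by
  rw [toLpLin_apply, mulVec_eigenvectorBasis, WithLp.toLp_smul, WithLp.toLp_ofLp]

namespace SimpleGraph

variable {V : Type*} [Fintype V] [DecidableEq V] (G : SimpleGraph V)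

theorem sLap_eq_incMatrix_mul_transpose : sLap G = G.incMatrix ℝ * (G.incMatrix ℝ)ᵀ := by
  rw [incMatrix_mul_transpose]
  ext a b
  by_cases h : a = b
  · subst h; simp [sLap]
  · simp [sLap, h, adjMatrix_apply]

theorem posSemidef_sLap : (sLap G).PosSemidef := by
  rw [sLap_eq_incMatrix_mul_transpose, ← conjTranspose_eq_transpose_of_trivial]
  exact posSemidef_self_mul_conjTranspose _

theorem inner_toEuclideanLin_sLap_le {S : Set V} (hS : G.IsIndepSet S)
    {x : EuclideanSpace ℝ V} (hx : ∀ v ∉ S, x v = 0) :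
    ⟪x, toEuclideanLin (sLap G) x⟫ ≤ G.maxDegree * ‖x‖ ^ 2 := by
  have hadj (u : V) : (G.adjMatrix ℝ *ᵥ x.ofLp) u * x u = 0 := by
    by_cases hu : u ∈ S
    · rw [adjMatrix_mulVec_apply]
      refine mul_eq_zero_of_left (sum_eq_zero fun v hv => hx v fun hvS => ?_) _
      have huv := (G.mem_neighborFinset u v).mp hv
      exact hS hu hvS huv.ne huv
    · rw [hx u hu, mul_zero]
  have hdiag (u : V) : (sLap G *ᵥ x.ofLp) u * x u = G.degree u * x u ^ 2 := by
    rw [sLap, add_mulVec, Pi.add_apply, add_mul, hadj, mulVec_diagonal]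
    ring
  calc ⟪x, toEuclideanLin (sLap G) x⟫ = ∑ u, G.degree u * x u ^ 2 := by
        simp only [EuclideanSpace.inner_eq_star_dotProduct, toLpLin_apply, star_trivial,
          dotProduct, hdiag]
    _ ≤ ∑ u, G.maxDegree * x u ^ 2 := by
        gcongr with u
        exact_mod_cast G.degree_le_maxDegree u
    _ = G.maxDegree * ‖x‖ ^ 2 := by
        rw [EuclideanSpace.real_norm_sq_eq, mul_sum]

end SimpleGraph

theorem stmt5 {n : ℕ} (G : SimpleGraph (Fin n)) (hQ : (sLap G).IsHermitian)
    (S : Finset (Fin n)) (hS : ∀ a ∈ S, ∀ b ∈ S, ¬ G.Adj a b) :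
    S.card ≤ eigCount hQ (Set.Icc (0 : ℝ) (G.maxDegree : ℝ)) := by
  let e := (EuclideanSpace.basisFun (Fin n) ℝ).toBasis
  let U := Submodule.span ℝ (e '' S)
  have hU : ∀ x ∈ U, ⟪x, toEuclideanLin (sLap G) x⟫ ≤ G.maxDegree * ‖x‖ ^ 2 := by
    intro x hx
    refine G.inner_toEuclideanLin_sLap_le (fun a ha b hb _ => hS a ha b hb) fun v hv => ?_
    by_contra h
    exact hv (e.mem_span_image.mp hx (by simpa [e] using h))
  have hcount : eigCount hQ (Set.Icc 0 G.maxDegree) = #{i | hQ.eigenvalues i ≤ G.maxDegree} := by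
    refine congrArg card (Finset.ext fun i => ?_)
    simp [G.posSemidef_sLap.eigenvalues_nonneg i]
  calc S.card = Module.finrank ℝ U := (e.finrank_span_image S).symm
    _ ≤ _ := (isSymmetric_toEuclideanLin_iff.mpr hQ).finrank_le_card_eigenvalues_le _ _
        hQ.toEuclideanLin_eigenvectorBasis U hU
    _ = _ := hcount.symm
end

section
/- Let G be a simple graph and e an edge of G. Then the signless Laplacian eigenvalues of G - e interlace those of G: q_1(G) ≥ q_1(G-e) ≥ q_2(G) ≥ q_2(G-e) ≥ ... ≥ q_n(G) ≥ q_n(G-e). -/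
/-!
The signless Laplacian factors as `Q(G) = N Nᵀ` through the vertex–edge incidence matrix `N`, so
deleting the edge `e` subtracts `w wᵀ`, where `w` is the column of `N` indexed by `e`. Interlacing
for a rank-one positive semidefinite update `B = A + w wᵀ` follows from the Courant–Fischer
min-max principle, with `a` and `b` the decreasingly ordered eigenvalues of `A` and `B`: the
quadratic form of `B` dominates that of `A`, giving `a i ≤ b i`, and the two forms agree on the
hyperplane `wᗮ`, which costs one dimension and gives `b (i + 1) ≤ a i`.
-/

open Finset
open scoped Classical

open Module Submodule
open scoped RealInnerProductSpace

lemma Submodule.exists_mem_inf_ne_zero_of_finrank_lt {K V : Type*} [DivisionRing K]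
    [AddCommGroup V] [Module K V] [FiniteDimensional K V] (S S' : Submodule K V)
    (h : finrank K V < finrank K S + finrank K S') : ∃ x ∈ S ⊓ S', x ≠ 0 := by
  by_contra! h0
  exact h.not_ge (finrank_add_finrank_le_of_disjoint
    (disjoint_def.2 fun x hx hx' => h0 x (mem_inf.2 ⟨hx, hx'⟩)))

section InnerProductSpace

variable {E : Type*} [NormedAddCommGroup E] [InnerProductSpace ℝ E]

lemma finrank_le_finrank_orthogonal_span_singleton_add_one [FiniteDimensional ℝ E] (w : E) :
    finrank ℝ E ≤ finrank ℝ (ℝ ∙ w)ᗮ + 1 := by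
  have hw : finrank ℝ (ℝ ∙ w) ≤ 1 := by simpa using finrank_span_le_card ({w} : Set E)
  have := (ℝ ∙ w).finrank_add_finrank_orthogonal
  omega

namespace OrthonormalBasis

variable {ι : Type*} [Fintype ι] (e : OrthonormalBasis ι ℝ E)

lemma inner_eq_zero_of_mem_span_image {s : Set ι} {x : E} (hx : x ∈ span ℝ (e '' s)) {i : ι}
    (hi : i ∉ s) : ⟪e i, x⟫ = 0 := by
  have hle : span ℝ (e '' s) ≤ (ℝ ∙ e i)ᗮ := by
    rw [span_le]
    rintro _ ⟨j, hj, rfl⟩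
    rw [SetLike.mem_coe, mem_orthogonal_singleton_iff_inner_right]
    exact e.orthonormal.inner_eq_zero (ne_of_mem_of_not_mem hj hi).symm
  exact mem_orthogonal_singleton_iff_inner_right.1 (hle hx)

lemma finrank_span_image_finset (t : Finset ι) : finrank ℝ (span ℝ (e '' t)) = #t := by
  rw [Set.image_eq_range]
  exact (finrank_span_eq_card (e.orthonormal.linearIndependent.comp _ Subtype.val_injective)).trans
    (Fintype.card_coe t)

end OrthonormalBasis

namespace LinearMap.IsSymmetric

variable {T : E →ₗ[ℝ] E}

section Rayleigh

variable {ι : Type*} [Fintype ι] {e : OrthonormalBasis ι ℝ E} {a : ι → ℝ}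

lemma inner_apply_self_eq_sum_mul_sq (hT : T.IsSymmetric) (he : ∀ i, T (e i) = a i • e i)
    (x : E) : ⟪x, T x⟫ = ∑ i, a i * ⟪e i, x⟫ ^ 2 := by
  rw [← e.sum_inner_mul_inner x (T x)]
  refine Finset.sum_congr rfl fun i _ => ?_
  rw [← hT, he, real_inner_smul_left, real_inner_comm]
  ring

lemma mul_norm_sq_le_inner_apply_self (hT : T.IsSymmetric) (he : ∀ i, T (e i) = a i • e i)
    {s : Set ι} {c : ℝ} (hc : ∀ i ∈ s, c ≤ a i) {x : E} (hx : x ∈ span ℝ (e '' s)) :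
    c * ‖x‖ ^ 2 ≤ ⟪x, T x⟫ := by
  rw [hT.inner_apply_self_eq_sum_mul_sq he, ← e.sum_sq_inner_right, Finset.mul_sum]
  refine Finset.sum_le_sum fun i _ => ?_
  by_cases hi : i ∈ s
  · exact mul_le_mul_of_nonneg_right (hc i hi) (sq_nonneg _)
  · simp [e.inner_eq_zero_of_mem_span_image hx hi]

lemma inner_apply_self_le_mul_norm_sq (hT : T.IsSymmetric) (he : ∀ i, T (e i) = a i • e i)
    {s : Set ι} {c : ℝ} (hc : ∀ i ∈ s, a i ≤ c) {x : E} (hx : x ∈ span ℝ (e '' s)) :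
    ⟪x, T x⟫ ≤ c * ‖x‖ ^ 2 := by
  rw [hT.inner_apply_self_eq_sum_mul_sq he, ← e.sum_sq_inner_right, Finset.mul_sum]
  refine Finset.sum_le_sum fun i _ => ?_
  by_cases hi : i ∈ s
  · exact mul_le_mul_of_nonneg_right (hc i hi) (sq_nonneg _)
  · simp [e.inner_eq_zero_of_mem_span_image hx hi]

end Rayleigh

section MinMax

variable [FiniteDimensional ℝ E] {n : ℕ} {e : OrthonormalBasis (Fin n) ℝ E} {a : Fin n → ℝ}

lemma le_eigenvalue_of_subspace (hT : T.IsSymmetric) (he : ∀ i, T (e i) = a i • e i)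
    (ha : Antitone a) {V : Submodule ℝ E} {i : Fin n} (hV : (i : ℕ) + 1 ≤ finrank ℝ V) {c : ℝ}
    (hc : ∀ x ∈ V, c * ‖x‖ ^ 2 ≤ ⟪x, T x⟫) : c ≤ a i := by
  obtain ⟨x, ⟨hxV, hxS⟩, hx0⟩ :=
    V.exists_mem_inf_ne_zero_of_finrank_lt (span ℝ (e '' ↑(Ici i))) (by
      rw [e.finrank_span_image_finset, Fin.card_Ici, finrank_eq_card_basis e.toBasis,
        Fintype.card_fin]
      omega)
  have hle := (hc x hxV).trans
    (hT.inner_apply_self_le_mul_norm_sq he (fun j hj => ha (Finset.mem_Ici.1 hj)) hxS)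
  exact le_of_mul_le_mul_right hle (by positivity)

lemma eigenvalue_le_of_subspace (hT : T.IsSymmetric) (he : ∀ i, T (e i) = a i • e i)
    (ha : Antitone a) {V : Submodule ℝ E} {i : Fin n} (hV : n - i ≤ finrank ℝ V) {c : ℝ}
    (hc : ∀ x ∈ V, ⟪x, T x⟫ ≤ c * ‖x‖ ^ 2) : a i ≤ c := by
  obtain ⟨x, ⟨hxV, hxS⟩, hx0⟩ :=
    V.exists_mem_inf_ne_zero_of_finrank_lt (span ℝ (e '' ↑(Iic i))) (by
      rw [e.finrank_span_image_finset, Fin.card_Iic, finrank_eq_card_basis e.toBasis,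
        Fintype.card_fin]
      omega)
  have hle := (hT.mul_norm_sq_le_inner_apply_self he (fun j hj => ha (Finset.mem_Iic.1 hj))
    hxS).trans (hc x hxV)
  exact le_of_mul_le_mul_right hle (by positivity)

variable {T' : E →ₗ[ℝ] E} {e' : OrthonormalBasis (Fin n) ℝ E} {b : Fin n → ℝ}

theorem eigenvalue_le_of_inner_apply_self_le (hT : T.IsSymmetric)
    (he : ∀ i, T (e i) = a i • e i) (ha : Antitone a) (hT' : T'.IsSymmetric)
    (he' : ∀ i, T' (e' i) = b i • e' i) (hb : Antitone b) (hTT' : ∀ x, ⟪x, T x⟫ ≤ ⟪x, T' x⟫)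
    (i : Fin n) : a i ≤ b i := by
  refine hT'.le_eigenvalue_of_subspace he' hb (V := span ℝ (e '' ↑(Iic i))) ?_ fun x hx => ?_
  · rw [e.finrank_span_image_finset, Fin.card_Iic]
  · exact (hT.mul_norm_sq_le_inner_apply_self he (fun j hj => ha (Finset.mem_Iic.1 hj)) hx).trans
      (hTT' x)

theorem eigenvalue_succ_le_of_inner_apply_self_eq_add_sq (hT : T.IsSymmetric)
    (he : ∀ i, T (e i) = a i • e i) (ha : Antitone a) (hT' : T'.IsSymmetric)
    (he' : ∀ i, T' (e' i) = b i • e' i) (hb : Antitone b) {w : E}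
    (hTT' : ∀ x, ⟪x, T' x⟫ = ⟪x, T x⟫ + ⟪w, x⟫ ^ 2) (i : Fin n) (h : (i : ℕ) + 1 < n) :
    b ⟨i + 1, h⟩ ≤ a i := by
  set S := span ℝ (e '' ↑(Ici i))
  refine hT'.eigenvalue_le_of_subspace he' hb (V := S ⊓ (ℝ ∙ w)ᗮ) ?_ fun x hx => ?_
  · have hS : finrank ℝ S = n - i := by rw [e.finrank_span_image_finset, Fin.card_Ici]
    have hE : finrank ℝ E = n := by rw [finrank_eq_card_basis e.toBasis, Fintype.card_fin]
    have := finrank_le_finrank_orthogonal_span_singleton_add_one w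
    have := S.finrank_sup_add_finrank_inf_eq (ℝ ∙ w)ᗮ
    have := (S ⊔ (ℝ ∙ w)ᗮ).finrank_le
    dsimp only
    omega
  · obtain ⟨hxS, hxw⟩ := mem_inf.1 hx
    rw [hTT', mem_orthogonal_singleton_iff_inner_right.1 hxw, sq, mul_zero, add_zero]
    exact hT.inner_apply_self_le_mul_norm_sq he (fun j hj => ha (Finset.mem_Ici.1 hj)) hxS

end MinMax

end LinearMap.IsSymmetric

end InnerProductSpace

namespace Matrix

variable {ι : Type*} [Fintype ι] [DecidableEq ι] {A : Matrix ι ι ℝ}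

lemma IsHermitian.toEuclideanLin_eigenvectorBasis_s6 (hA : A.IsHermitian) (j : ι) :
    toEuclideanLin A (hA.eigenvectorBasis j) = hA.eigenvalues j • hA.eigenvectorBasis j :=
  WithLp.ofLp_injective 2 (hA.mulVec_eigenvectorBasis j)

lemma IsHermitian.toEuclideanLin_reindex_eigenvectorBasis (hA : A.IsHermitian) {a : ι → ℝ}
    (σ : Equiv.Perm ι) (haσ : ∀ i, a i = hA.eigenvalues (σ i)) (i : ι) :
    toEuclideanLin A (hA.eigenvectorBasis.reindex σ.symm i) =
      a i • hA.eigenvectorBasis.reindex σ.symm i := by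
  rw [OrthonormalBasis.reindex_apply, Equiv.symm_symm, haσ, hA.toEuclideanLin_eigenvectorBasis_s6]

lemma inner_toEuclideanLin_vecMulVec_self (w : ι → ℝ) (x : EuclideanSpace ℝ ι) :
    ⟪x, toEuclideanLin (vecMulVec w w) x⟫ = ⟪WithLp.toLp 2 w, x⟫ ^ 2 := by
  simp [EuclideanSpace.inner_eq_star_dotProduct, toLpLin_apply, vecMulVec_mulVec, sq,
    dotProduct_comm]

theorem IsHermitian.eigenvalues_interlace_of_eq_add_vecMulVec_self {n : ℕ}
    {A B : Matrix (Fin n) (Fin n) ℝ} (w : Fin n → ℝ) (hBA : B = A + vecMulVec w w)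
    (hA : A.IsHermitian) (hB : B.IsHermitian) {a b : Fin n → ℝ} (ha : Antitone a)
    (hb : Antitone b) (σ τ : Equiv.Perm (Fin n)) (haσ : ∀ i, a i = hA.eigenvalues (σ i))
    (hbτ : ∀ i, b i = hB.eigenvalues (τ i)) :
    (∀ i, a i ≤ b i) ∧ ∀ i : Fin n, ∀ h : (i : ℕ) + 1 < n, b ⟨i + 1, h⟩ ≤ a i := by
  have hT := isSymmetric_toEuclideanLin_iff.2 hA
  have hT' := isSymmetric_toEuclideanLin_iff.2 hB
  have he := hA.toEuclideanLin_reindex_eigenvectorBasis σ haσ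
  have he' := hB.toEuclideanLin_reindex_eigenvectorBasis τ hbτ
  have hquad (x : EuclideanSpace ℝ (Fin n)) :
      ⟪x, toEuclideanLin B x⟫ = ⟪x, toEuclideanLin A x⟫ + ⟪WithLp.toLp 2 w, x⟫ ^ 2 := by
    rw [hBA, map_add, LinearMap.add_apply, inner_add_right, inner_toEuclideanLin_vecMulVec_self]
  refine ⟨hT.eigenvalue_le_of_inner_apply_self_le he ha hT' he' hb fun x => ?_,
    hT.eigenvalue_succ_le_of_inner_apply_self_eq_add_sq he ha hT' he' hb hquad⟩
  rw [hquad]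
  exact le_add_of_nonneg_right (sq_nonneg _)

end Matrix

namespace SimpleGraph

variable {V : Type*} (G : SimpleGraph V)

lemma incidenceSet_deleteEdges (s : Set (Sym2 V)) (x : V) :
    (G.deleteEdges s).incidenceSet x = G.incidenceSet x \ s := by
  ext e
  simp only [incidenceSet, edgeSet_deleteEdges, Set.mem_sdiff, Set.mem_ofPred_eq]
  tauto

lemma incMatrix_deleteEdges_apply_of_notMem [DecidableEq V] {R : Type*} [Zero R] [One R]
    [DecidableRel G.Adj] (s : Set (Sym2 V)) [DecidableRel (G.deleteEdges s).Adj] (x : V)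
    {e : Sym2 V} (he : e ∉ s) :
    (G.deleteEdges s).incMatrix R x e = G.incMatrix R x e := by
  rw [incMatrix_apply, incMatrix_apply, incidenceSet_deleteEdges]
  by_cases hx : e ∈ G.incidenceSet x
  · rw [Set.indicator_of_mem hx, Set.indicator_of_mem (show e ∈ G.incidenceSet x \ s from ⟨hx, he⟩)]
  · rw [Set.indicator_of_notMem hx, Set.indicator_of_notMem fun h => hx h.1]

lemma incMatrix_deleteEdges_apply_of_mem [DecidableEq V] {R : Type*} [Zero R] [One R]
    (s : Set (Sym2 V)) [DecidableRel (G.deleteEdges s).Adj] (x : V) {e : Sym2 V} (he : e ∈ s) :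
    (G.deleteEdges s).incMatrix R x e = 0 := by
  simp [incMatrix_apply, incidenceSet_deleteEdges, he]

lemma sLap_eq_incMatrix_mul_transpose_s6 [Fintype V] [DecidableEq V] [DecidableRel G.Adj] :
    sLap G = G.incMatrix ℝ * (G.incMatrix ℝ).transpose := by
  rw [incMatrix_mul_transpose]
  ext x y
  by_cases hxy : x = y
  · subst hxy
    simp only [sLap, Matrix.add_apply, Matrix.diagonal_apply_eq, adjMatrix_apply,
      SimpleGraph.irrefl, if_false, add_zero, Matrix.of_apply, if_true, Nat.cast_inj]
    -- `sLap` counts degrees with the classical `Fintype (G.neighborSet x)` instance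
    convert rfl
  · simp [sLap, hxy]

lemma sLap_eq_sLap_deleteEdges_add_vecMulVec [Fintype V] [DecidableEq V] (e₀ : Sym2 V) :
    sLap G = sLap (G.deleteEdges {e₀}) +
      Matrix.vecMulVec (fun x => G.incMatrix ℝ x e₀) (fun x => G.incMatrix ℝ x e₀) := by
  rw [sLap_eq_incMatrix_mul_transpose_s6 G, sLap_eq_incMatrix_mul_transpose_s6 (G.deleteEdges _)]
  ext x y
  simp only [Matrix.add_apply, Matrix.mul_apply, Matrix.transpose_apply, Matrix.vecMulVec_apply]
  rw [← Finset.add_sum_erase _ _ (mem_univ e₀), ← Finset.add_sum_erase _ _ (mem_univ e₀),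
    incMatrix_deleteEdges_apply_of_mem _ _ _ (Set.mem_singleton e₀), zero_mul, zero_add, add_comm]
  refine congrArg₂ _ (Finset.sum_congr rfl fun e he => ?_) rfl
  have he₀ : e ∉ ({e₀} : Set (Sym2 V)) := Finset.ne_of_mem_erase he
  rw [incMatrix_deleteEdges_apply_of_notMem _ _ _ he₀,
    incMatrix_deleteEdges_apply_of_notMem _ _ _ he₀]

end SimpleGraph

theorem stmt6_general {n : ℕ} (G : SimpleGraph (Fin n)) {u v : Fin n}
    (hQ : (sLap G).IsHermitian)
    (hQ' : (sLap (G.deleteEdges {s(u, v)})).IsHermitian)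
    (q q' : Fin n → ℝ) (hq : Antitone q) (hq' : Antitone q')
    (σ τ : Equiv.Perm (Fin n))
    (hqσ : ∀ i, q i = hQ.eigenvalues (σ i))
    (hqτ : ∀ i, q' i = hQ'.eigenvalues (τ i)) :
    (∀ i, q' i ≤ q i) ∧
    ∀ i : Fin n, ∀ h : (i : ℕ) + 1 < n, q ⟨(i : ℕ) + 1, h⟩ ≤ q' i :=
  Matrix.IsHermitian.eigenvalues_interlace_of_eq_add_vecMulVec_self _
    (G.sLap_eq_sLap_deleteEdges_add_vecMulVec s(u, v)) hQ' hQ hq' hq τ σ hqτ hqσ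

theorem stmt6 {n : ℕ} (G : SimpleGraph (Fin n)) {u v : Fin n} (huv : G.Adj u v)
    (hQ : (sLap G).IsHermitian)
    (hQ' : (sLap (G.deleteEdges {s(u, v)})).IsHermitian)
    (q q' : Fin n → ℝ) (hq : Antitone q) (hq' : Antitone q')
    (σ τ : Equiv.Perm (Fin n))
    (hqσ : ∀ i, q i = hQ.eigenvalues (σ i))
    (hqτ : ∀ i, q' i = hQ'.eigenvalues (τ i)) :
    (∀ i, q' i ≤ q i) ∧
    ∀ i : Fin n, ∀ h : (i : ℕ) + 1 < n, q ⟨(i : ℕ) + 1, h⟩ ≤ q' i :=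
  stmt6_general G hQ hQ' q q' hq hq' σ τ hqσ hqτ
end

section
/- If H is an induced subgraph of a simple graph G of order n, then for every real a, the number of signless Laplacian eigenvalues of H in [a, ∞) is at most the number of signless Laplacian eigenvalues of G in [a, ∞). -/
/-!
Extension by zero is an isometry `ℝ^s → ℝ^n` that carries the quadratic form of the principal
submatrix `Q(G)[s, s]` to that of `Q(G)`, and `Q(G)[s, s]` exceeds `Q(H)` by the nonnegative
diagonal matrix of degrees lost in passing to `H`. So the span of the eigenvectors of `Q(H)` with
eigenvalue `≥ a` is carried to a subspace of the same dimension on which `⟪x, Q(G) x⟫ ≥ a ‖x‖²`.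
A vector of such a subspace that is orthogonal to every eigenvector of `Q(G)` with eigenvalue
`≥ a` has `⟪x, Q(G) x⟫ < a ‖x‖²` unless it vanishes, so the dimension of the subspace is at most
the number of those eigenvectors.
-/

open Finset
open scoped Classical

open scoped RealInnerProductSpace

namespace Matrix

variable {R m n : Type*} [Fintype m] [Fintype n]

theorem extend_dotProduct_mulVec_extend [NonUnitalNonAssocSemiring R] {e : m → n}
    (he : Function.Injective e) (M : Matrix n n R) (x y : m → R) :
    Function.extend e x 0 ⬝ᵥ (M *ᵥ Function.extend e y 0) = x ⬝ᵥ (M.submatrix e e *ᵥ y) := by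
  have off_range {z : m → R} {j : n} (hj : j ∉ Set.range e) : Function.extend e z 0 j = 0 :=
    Function.extend_apply' _ _ _ hj
  have hMy (i : m) : (M *ᵥ Function.extend e y 0) (e i) = (M.submatrix e e *ᵥ y) i :=
    (Fintype.sum_of_injective e he _ _ (fun j hj => by simp [off_range hj])
      (fun j => by simp [he.extend_apply])).symm
  exact (Fintype.sum_of_injective e he _ _ (fun j hj => by simp [off_range hj])
    (fun i => by simp [he.extend_apply, hMy])).symm

end Matrix

namespace EuclideanSpace

variable {m n : Type*} [Fintype m] [Fintype n] {e : m → n}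

noncomputable def extendByZero (he : Function.Injective e) :
    EuclideanSpace ℝ m →ₗᵢ[ℝ] EuclideanSpace ℝ n :=
  LinearMap.isometryOfInner
    ((WithLp.linearEquiv 2 ℝ (n → ℝ)).symm.toLinearMap ∘ₗ
      Function.ExtendByZero.linearMap ℝ e ∘ₗ (WithLp.linearEquiv 2 ℝ (m → ℝ)).toLinearMap)
    fun x y => by
      have h := Matrix.extend_dotProduct_mulVec_extend he 1 y.ofLp x.ofLp
      rwa [Matrix.submatrix_one _ he, Matrix.one_mulVec, Matrix.one_mulVec] at h

theorem inner_extendByZero_toEuclideanLin (he : Function.Injective e) [DecidableEq m]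
    [DecidableEq n] (M : Matrix n n ℝ) (y : EuclideanSpace ℝ m) :
    ⟪extendByZero he y, Matrix.toEuclideanLin M (extendByZero he y)⟫ =
      ⟪y, Matrix.toEuclideanLin (M.submatrix e e) y⟫ := by
  simp only [EuclideanSpace.inner_eq_star_dotProduct, dotProduct_comm _ (star _)]
  exact Matrix.extend_dotProduct_mulVec_extend he M y y

end EuclideanSpace

namespace Matrix.IsHermitian

variable {m : Type*} [Fintype m] [DecidableEq m] {A : Matrix m m ℝ} (hA : A.IsHermitian)

theorem toEuclideanLin_eigenvectorBasis_s8 (i : m) :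
    toEuclideanLin A (hA.eigenvectorBasis i) = hA.eigenvalues i • hA.eigenvectorBasis i :=
  (WithLp.linearEquiv 2 ℝ (m → ℝ)).injective (hA.mulVec_eigenvectorBasis i)

theorem inner_toEuclideanLin_self (x : EuclideanSpace ℝ m) :
    ⟪x, toEuclideanLin A x⟫ = ∑ i, hA.eigenvalues i * ⟪hA.eigenvectorBasis i, x⟫ ^ 2 := by
  nth_rw 2 [← hA.eigenvectorBasis.sum_repr' x]
  simp only [map_sum, map_smul, hA.toEuclideanLin_eigenvectorBasis_s8, inner_sum,
    real_inner_smul_right, real_inner_comm x]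
  exact sum_congr rfl fun i _ => by ring

theorem finrank_le_card_eigenvalues_ge {a : ℝ} (W : Submodule ℝ (EuclideanSpace ℝ m))
    (hW : ∀ x ∈ W, a * ‖x‖ ^ 2 ≤ ⟪x, toEuclideanLin A x⟫) :
    Module.finrank ℝ W ≤ #{i | a ≤ hA.eigenvalues i} := by
  set b := hA.eigenvectorBasis
  let coeffs : W →ₗ[ℝ] ({i | a ≤ hA.eigenvalues i} : Finset m) → ℝ :=
    LinearMap.pi fun i => (innerₛₗ ℝ (b i)).comp W.subtype
  have hinj : Function.Injective coeffs := by
    refine (injective_iff_map_eq_zero coeffs).2 fun ⟨x, hx⟩ h0 => ?_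
    have hF (i : m) (hi : a ≤ hA.eigenvalues i) : ⟪b i, x⟫ = 0 :=
      congr_fun h0 ⟨i, by simpa using hi⟩
    have hterm (i : m) : 0 ≤ (a - hA.eigenvalues i) * ⟪b i, x⟫ ^ 2 := by
      by_cases hi : a ≤ hA.eigenvalues i
      · simp [hF i hi]
      · exact mul_nonneg (by linarith) (sq_nonneg _)
    have hsum : ∑ i, (a - hA.eigenvalues i) * ⟪b i, x⟫ ^ 2 ≤ 0 := by
      have := hW x hx
      rw [hA.inner_toEuclideanLin_self, ← b.sum_sq_inner_right, mul_sum] at this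
      simpa [sub_mul] using this
    have hzero := (sum_eq_zero_iff_of_nonneg fun i _ => hterm i).1
      (le_antisymm hsum (sum_nonneg fun i _ => hterm i))
    have hc (i : m) : ⟪b i, x⟫ = 0 := by
      by_cases hi : a ≤ hA.eigenvalues i
      · exact hF i hi
      · exact pow_eq_zero_iff two_ne_zero |>.1 <|
          (mul_eq_zero.1 (hzero i (mem_univ i))).resolve_left (by linarith)
    ext1
    simpa [hc] using (b.sum_repr' x).symm
  calc Module.finrank ℝ W ≤ Module.finrank ℝ (({i | a ≤ hA.eigenvalues i} : Finset m) → ℝ) :=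
        LinearMap.finrank_le_finrank_of_injective hinj
    _ = #{i | a ≤ hA.eigenvalues i} := by
        rw [Module.finrank_fintype_fun_eq_card, Fintype.card_coe]

theorem exists_finrank_eq_card_eigenvalues_ge (a : ℝ) :
    ∃ W : Submodule ℝ (EuclideanSpace ℝ m), Module.finrank ℝ W = #{i | a ≤ hA.eigenvalues i} ∧
      ∀ x ∈ W, a * ‖x‖ ^ 2 ≤ ⟪x, toEuclideanLin A x⟫ := by
  set b := hA.eigenvectorBasis with hb
  set F : Finset m := {i | a ≤ hA.eigenvalues i}
  refine ⟨Submodule.span ℝ (b '' F), ?_, fun x hx => ?_⟩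
  · rw [Set.image_eq_range]
    exact (finrank_span_eq_card (b.orthonormal.linearIndependent.comp ((↑) : F → m)
      Subtype.val_injective)).trans (Fintype.card_coe F)
  · have hc (i : m) (hi : i ∉ F) : ⟪b i, x⟫ = 0 := by
      refine Submodule.span_le (p := LinearMap.ker (innerₛₗ ℝ (b i))) |>.2 ?_ hx
      rintro _ ⟨j, hj, rfl⟩
      exact b.orthonormal.inner_eq_zero (ne_of_mem_of_not_mem hj hi).symm
    rw [hA.inner_toEuclideanLin_self, ← hb, ← b.sum_sq_inner_right, mul_sum]
    refine sum_le_sum fun i _ => ?_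
    by_cases hi : i ∈ F
    · exact mul_le_mul_of_nonneg_right (by simpa [F] using hi) (sq_nonneg _)
    · simp [hc i hi]

variable {n : Type*} [Fintype n] [DecidableEq n] {B : Matrix n n ℝ}

theorem card_eigenvalues_ge_le_of_isometry (hB : B.IsHermitian)
    (f : EuclideanSpace ℝ m →ₗᵢ[ℝ] EuclideanSpace ℝ n)
    (hf : ∀ y, ⟪y, toEuclideanLin A y⟫ ≤ ⟪f y, toEuclideanLin B (f y)⟫) (a : ℝ) :
    #{i | a ≤ hA.eigenvalues i} ≤ #{j | a ≤ hB.eigenvalues j} := by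
  obtain ⟨W, hW_finrank, hW⟩ := hA.exists_finrank_eq_card_eigenvalues_ge a
  calc #{i | a ≤ hA.eigenvalues i} = Module.finrank ℝ (W.map f.toLinearMap) := by
        rw [← hW_finrank]
        exact (Submodule.equivMapOfInjective _ f.injective W).finrank_eq
    _ ≤ #{j | a ≤ hB.eigenvalues j} := by
        refine hB.finrank_le_card_eigenvalues_ge _ ?_
        rintro _ ⟨y, hy, rfl⟩
        calc a * ‖f y‖ ^ 2 = a * ‖y‖ ^ 2 := by rw [f.norm_map]
          _ ≤ ⟪y, toEuclideanLin A y⟫ := hW y hy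
          _ ≤ _ := hf y

theorem card_eigenvalues_ge_le_of_posSemidef_submatrix_sub (hB : B.IsHermitian) {e : m → n}
    (he : Function.Injective e) (hBA : (B.submatrix e e - A).PosSemidef) (a : ℝ) :
    #{i | a ≤ hA.eigenvalues i} ≤ #{j | a ≤ hB.eigenvalues j} := by
  refine hA.card_eigenvalues_ge_le_of_isometry hB (EuclideanSpace.extendByZero he) (fun y => ?_) a
  have := (isPositive_toEuclideanLin_iff.2 hBA).inner_nonneg_right y
  rw [EuclideanSpace.inner_extendByZero_toEuclideanLin]
  simpa [map_sub, inner_sub_right] using this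

end Matrix.IsHermitian

namespace SimpleGraph

theorem degree_induce_le {V : Type*} (G : SimpleGraph V) (s : Set V) (v : s)
    [Fintype ((G.induce s).neighborSet v)] [Fintype (G.neighborSet v)] :
    (G.induce s).degree v ≤ G.degree v := by
  rw [← card_neighborSet_eq_degree, ← card_neighborSet_eq_degree]
  exact Fintype.card_le_of_injective (fun w => ⟨w.1, w.2⟩) fun w w' h => by
    simpa [Subtype.ext_iff] using h

end SimpleGraph

section Graph

variable {V : Type*} [Fintype V] [DecidableEq V]

theorem sLap_submatrix_sub_sLap_induce (G : SimpleGraph V) (s : Set V) :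
    (sLap G).submatrix Subtype.val Subtype.val - sLap (G.induce s) =
      Matrix.diagonal fun v : s => ((G.degree v : ℝ) - (G.induce s).degree v) := by
  ext v w
  by_cases h : v = w
  · subst h
    -- the two degrees of `v` in `G.induce s` differ only in their `Fintype` instances
    simp only [sLap, Matrix.sub_apply, Matrix.submatrix_apply, Matrix.add_apply,
      Matrix.diagonal_apply_eq, SimpleGraph.adjMatrix_apply, SimpleGraph.irrefl, if_false,
      add_zero, sub_right_inj, Nat.cast_inj]
    congr 1
  · simp [sLap, h, Subtype.coe_injective.ne h]

theorem posSemidef_sLap_submatrix_sub_sLap_induce (G : SimpleGraph V) (s : Set V) :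
    ((sLap G).submatrix Subtype.val Subtype.val - sLap (G.induce s)).PosSemidef := by
  rw [sLap_submatrix_sub_sLap_induce]
  exact .diagonal fun v => sub_nonneg.2 <| Nat.cast_le.2 <| by convert G.degree_induce_le s v

end Graph

theorem stmt8 {n : ℕ} (G : SimpleGraph (Fin n)) (s : Set (Fin n))
    (hQ : (sLap G).IsHermitian) (hQH : (sLap (G.induce s)).IsHermitian) (a : ℝ) :
    (Finset.univ.filter fun i => a ≤ hQH.eigenvalues i).card ≤
      (Finset.univ.filter fun i => a ≤ hQ.eigenvalues i).card :=
  hQH.card_eigenvalues_ge_le_of_posSemidef_submatrix_sub hQ Subtype.val_injective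
    (posSemidef_sLap_submatrix_sub_sLap_induce G s) a
end

section
/- For n ≥ 3, the signless Laplacian spectrum of K_n minus one edge consists of the two eigenvalues (3n-6 ± √((n-2)(n+6)))/2, each with multiplicity 1, together with n-2 with multiplicity n-2. -/
/-!
Write `N = |V|` and `w` for the indicator vector of `{u, v}`. Then `Q = (N - 2) I + J - w wᵀ`, so
`Q - (N - 2) I` has rank at most two and `N - 2` is an eigenvalue of multiplicity at least `N - 2`.
The plane spanned by `1` and `w` is `Q`-invariant, and `(t - N + 4) 1 - 2 w` is an eigenvector
for each root `t` of `t² - (3N - 6) t + 2 (N - 2)(N - 3)`, that is,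
`t = (3N - 6 ± √((N - 2)(N + 6))) / 2`.
These account for all `N` eigenvalues, so every multiplicity is exact.
-/

open Finset
open scoped Classical

open Matrix

lemma card_fibers_eq_of_lower_bounds {ι β : Type*} [Fintype ι] [DecidableEq β] (f : ι → β)
    {a b c : β} (hab : a ≠ b) (hac : a ≠ c) (hbc : b ≠ c) (ha : 0 < #{i | f i = a})
    (hb : 0 < #{i | f i = b}) (hc : Fintype.card ι - 2 ≤ #{i | f i = c}) :
    #{i | f i = a} = 1 ∧ #{i | f i = b} = 1 ∧ #{i | f i = c} = Fintype.card ι - 2 := by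
  have hdisj {x y : β} (hxy : x ≠ y) :
      Disjoint (univ.filter fun i => f i = x) (univ.filter fun i => f i = y) :=
    disjoint_filter.mpr fun _ _ hx hy => hxy (hx.symm.trans hy)
  have hsum : #{i | f i = a} + #{i | f i = b} + #{i | f i = c} ≤ Fintype.card ι := by
    rw [← card_union_of_disjoint (hdisj hab),
      ← card_union_of_disjoint (disjoint_union_left.mpr ⟨hdisj hac, hdisj hbc⟩)]
    exact card_le_univ _
  omega

theorem Matrix.rank_add_le {K m n : Type*} [Field K] [Finite m] [Fintype n]
    (A B : Matrix m n K) : (A + B).rank ≤ A.rank + B.rank := by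
  rw [rank, rank, rank, mulVecLin_add]
  exact (Submodule.finrank_mono (LinearMap.range_add_le _ _)).trans
    (Submodule.finrank_add_le_finrank_add_finrank _ _)

namespace Matrix.IsHermitian

variable {𝕜 n : Type*} [RCLike 𝕜] [Fintype n] [DecidableEq n] {A : Matrix n n 𝕜}
  (hA : A.IsHermitian)
include hA

lemma rank_sub_smul_one (t : ℝ) :
    (A - (t : 𝕜) • 1).rank = Fintype.card {i // hA.eigenvalues i ≠ t} := by
  have hdiag : diagonal (RCLike.ofReal ∘ hA.eigenvalues) - (t : 𝕜) • (1 : Matrix n n 𝕜)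
      = diagonal (RCLike.ofReal ∘ fun i => hA.eigenvalues i - t) := by
    ext i j
    by_cases h : i = j <;> simp [h, Algebra.algebraMap_eq_smul_one, sub_smul]
  conv_lhs =>
    rw [hA.spectral_theorem, ← map_one (Unitary.conjStarAlgAut 𝕜 _ hA.eigenvectorUnitary),
      ← map_smul, ← map_sub, hdiag, Unitary.conjStarAlgAut_apply, ← Unitary.coe_star]
  simp [-isUnit_iff_ne_zero, -Unitary.coe_star, rank_diagonal, sub_eq_zero]

lemma card_eigenvalues_eq (t : ℝ) :
    #{i | hA.eigenvalues i = t} = Fintype.card n - (A - (t : 𝕜) • 1).rank := by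
  rw [hA.rank_sub_smul_one, Fintype.card_subtype, ← card_univ,
    ← card_filter_add_card_filter_not (s := univ) (fun i => hA.eigenvalues i = t)]
  simp

lemma exists_eigenvalues_eq_of_mulVec_eq {x : n → 𝕜} {t : ℝ} (hx : x ≠ 0)
    (h : A *ᵥ x = (t : 𝕜) • x) : ∃ i, hA.eigenvalues i = t := by
  have ht : (t : 𝕜) ∈ spectrum 𝕜 A := by
    rw [← spectrum_toLin', ← Module.End.hasEigenvalue_iff_mem_spectrum]
    exact Module.End.hasEigenvalue_of_hasEigenvector ⟨Module.End.mem_eigenspace_iff.mpr h, hx⟩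
  rwa [← RCLike.algebraMap_eq_ofReal, spectrum.algebraMap_mem_iff,
    hA.spectrum_real_eq_range_eigenvalues] at ht

end Matrix.IsHermitian

namespace SimpleGraph

variable {V : Type*} [DecidableEq V] {u v : V}

def pairIndicator (u v : V) : V → ℝ := fun i => if i = u ∨ i = v then 1 else 0

lemma pairIndicator_mul_self (i : V) :
    pairIndicator u v i * pairIndicator u v i = pairIndicator u v i := by
  unfold pairIndicator
  split_ifs <;> norm_num

lemma adjMatrix_top_deleteEdges
    [DecidableRel ((⊤ : SimpleGraph V).deleteEdges {s(u, v)}).Adj] :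
    ((⊤ : SimpleGraph V).deleteEdges {s(u, v)}).adjMatrix ℝ
      = of fun i j => if i = j then 0 else 1 - pairIndicator u v i * pairIndicator u v j := by
  ext i j
  by_cases h : i = j
  · simp [h]
  · simp only [adjMatrix_apply, deleteEdges_adj, top_adj, Set.mem_singleton_iff, Sym2.eq_iff,
      pairIndicator, of_apply, h]
    split_ifs <;> grind

variable [Fintype V]

lemma sum_pairIndicator (huv : u ≠ v) : ∑ i, pairIndicator u v i = 2 := by
  simp only [pairIndicator, sum_boole]
  rw [filter_or, filter_eq', filter_eq', if_pos (mem_univ _), if_pos (mem_univ _), ← insert_eq,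
    card_pair huv]
  norm_num

lemma pairIndicator_dotProduct_self (huv : u ≠ v) :
    pairIndicator u v ⬝ᵥ pairIndicator u v = 2 := by
  simp only [dotProduct, pairIndicator_mul_self]
  exact sum_pairIndicator huv

lemma degree_top_deleteEdges (huv : u ≠ v) (i : V) :
    (((⊤ : SimpleGraph V).deleteEdges {s(u, v)}).degree i : ℝ)
      = Fintype.card V - 1 - pairIndicator u v i := by
  have hdeg := ((⊤ : SimpleGraph V).deleteEdges {s(u, v)}).adjMatrix_mulVec_const_apply
    (α := ℝ) (a := 1) (v := i)
  have hrow (j : V) : (if i = j then 0 else 1 - pairIndicator u v i * pairIndicator u v j)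
      = 1 - pairIndicator u v i * pairIndicator u v j
        - if i = j then 1 - pairIndicator u v i * pairIndicator u v i else 0 := by
    split_ifs with h <;> simp [h]
  rw [mul_one, adjMatrix_top_deleteEdges] at hdeg
  rw [← hdeg]
  simp only [mulVec, dotProduct, of_apply, Function.const_apply, mul_one, hrow,
    sum_sub_distrib, sum_ite_eq, mem_univ, if_true, ← mul_sum, pairIndicator_mul_self]
  simp only [sum_const, card_univ, nsmul_eq_mul, mul_one, sum_pairIndicator huv]
  ring

lemma sLap_top_deleteEdges (huv : u ≠ v) :
    sLap ((⊤ : SimpleGraph V).deleteEdges {s(u, v)})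
      = ((Fintype.card V : ℝ) - 2) • 1
        + (vecMulVec 1 1 - vecMulVec (pairIndicator u v) (pairIndicator u v)) := by
  ext i j
  by_cases h : i = j
  · subst h
    simp only [sLap, Matrix.add_apply, diagonal_apply_eq, adjMatrix_apply, SimpleGraph.irrefl,
      if_false, add_zero, Matrix.smul_apply, one_apply_eq, smul_eq_mul, mul_one, Matrix.sub_apply,
      vecMulVec, of_apply, Pi.one_apply, pairIndicator_mul_self]
    -- `sLap` computes degrees with the classical decidability instance of the adjacency relation
    convert degree_top_deleteEdges huv i using 1
    · congr!
    · ring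
  · simp [sLap, adjMatrix_top_deleteEdges, h, vecMulVec]

lemma rank_sLap_top_deleteEdges_sub_le (huv : u ≠ v) :
    (sLap ((⊤ : SimpleGraph V).deleteEdges {s(u, v)})
      - ((Fintype.card V : ℝ) - 2) • 1).rank ≤ 2 := by
  rw [sLap_top_deleteEdges huv, add_sub_cancel_left, sub_eq_add_neg, ← neg_vecMulVec]
  exact (rank_add_le _ _).trans (add_le_add (rank_vecMulVec_le _ _) (rank_vecMulVec_le _ _))

lemma sLap_top_deleteEdges_mulVec (huv : u ≠ v) {t : ℝ}
    (ht : t ^ 2 - (3 * Fintype.card V - 6) * t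
      + 2 * (Fintype.card V - 2) * (Fintype.card V - 3) = 0) :
    sLap ((⊤ : SimpleGraph V).deleteEdges {s(u, v)}) *ᵥ
        ((t - Fintype.card V + 4) • 1 - (2 : ℝ) • pairIndicator u v)
      = t • ((t - Fintype.card V + 4) • 1 - (2 : ℝ) • pairIndicator u v) := by
  rw [sLap_top_deleteEdges huv, add_mulVec, sub_mulVec, smul_mulVec, one_mulVec,
    vecMulVec_mulVec, vecMulVec_mulVec]
  simp only [dotProduct_sub, dotProduct_smul, one_dotProduct_one,
    pairIndicator_dotProduct_self huv, op_smul_eq_smul]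
  simp only [one_dotProduct, dotProduct_one, sum_pairIndicator huv]
  ext i
  simp only [Pi.add_apply, Pi.sub_apply, Pi.smul_apply, Pi.one_apply, smul_eq_mul]
  linear_combination -ht

lemma exists_eigenvalues_sLap_top_deleteEdges_eq (hV : 3 ≤ Fintype.card V) (huv : u ≠ v)
    (hQ : (sLap ((⊤ : SimpleGraph V).deleteEdges {s(u, v)})).IsHermitian) {t : ℝ}
    (ht : t ^ 2 - (3 * Fintype.card V - 6) * t
      + 2 * (Fintype.card V - 2) * (Fintype.card V - 3) = 0) :
    ∃ i, hQ.eigenvalues i = t := by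
  obtain ⟨k, -, hk⟩ : ∃ k ∈ univ, k ∉ ({u, v} : Finset V) :=
    exists_mem_notMem_of_card_lt_card (card_le_two.trans_lt (by rw [card_univ]; omega))
  refine hQ.exists_eigenvalues_eq_of_mulVec_eq
    (x := (t - Fintype.card V + 4) • 1 - (2 : ℝ) • pairIndicator u v) ?_ ?_
  · intro hx
    have hxk := congrFun hx k
    have hxu := congrFun hx u
    simp only [mem_insert, mem_singleton, not_or] at hk
    simp only [Pi.sub_apply, Pi.smul_apply, Pi.one_apply, Pi.zero_apply, smul_eq_mul, mul_one,
      pairIndicator, hk.1, hk.2, or_self, true_or, if_true, if_false, mul_zero, sub_zero] at hxk hxu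
    linarith
  · simpa using sLap_top_deleteEdges_mulVec huv ht

end SimpleGraph

theorem stmt9 {n : ℕ} (hn : 3 ≤ n) {u v : Fin n} (huv : u ≠ v)
    (hQ : (sLap ((⊤ : SimpleGraph (Fin n)).deleteEdges {s(u, v)})).IsHermitian) :
    (Finset.univ.filter fun i =>
        hQ.eigenvalues i = (3 * (n : ℝ) - 6 + Real.sqrt (((n : ℝ) - 2) * ((n : ℝ) + 6))) / 2).card = 1 ∧
    (Finset.univ.filter fun i =>
        hQ.eigenvalues i = (3 * (n : ℝ) - 6 - Real.sqrt (((n : ℝ) - 2) * ((n : ℝ) + 6))) / 2).card = 1 ∧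
    (Finset.univ.filter fun i => hQ.eigenvalues i = (n : ℝ) - 2).card = n - 2 := by
  have hn' : (3 : ℝ) ≤ n := by exact_mod_cast hn
  set s := √(((n : ℝ) - 2) * ((n : ℝ) + 6))
  have hs : s ^ 2 = ((n : ℝ) - 2) * ((n : ℝ) + 6) := Real.sq_sqrt (by nlinarith)
  have hs_pos : 0 < s := Real.sqrt_pos.mpr (by nlinarith)
  have hV : 3 ≤ Fintype.card (Fin n) := by rwa [Fintype.card_fin]
  obtain ⟨i₁, hi₁⟩ := SimpleGraph.exists_eigenvalues_sLap_top_deleteEdges_eq hV huv hQ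
    (t := (3 * (n : ℝ) - 6 + s) / 2) (by rw [Fintype.card_fin]; linear_combination hs / 4)
  obtain ⟨i₂, hi₂⟩ := SimpleGraph.exists_eigenvalues_sLap_top_deleteEdges_eq hV huv hQ
    (t := (3 * (n : ℝ) - 6 - s) / 2) (by rw [Fintype.card_fin]; linear_combination hs / 4)
  have hmid : n - 2 ≤ #{i | hQ.eigenvalues i = (n : ℝ) - 2} := by
    have hrank := SimpleGraph.rank_sLap_top_deleteEdges_sub_le huv (V := Fin n)
    rw [hQ.card_eigenvalues_eq]
    simp only [Fintype.card_fin, RCLike.ofReal_real_eq_id, id] at hrank ⊢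
    omega
  have h12 : (3 * (n : ℝ) - 6 + s) / 2 ≠ (3 * (n : ℝ) - 6 - s) / 2 := by intro h; linarith
  have h13 : (3 * (n : ℝ) - 6 + s) / 2 ≠ (n : ℝ) - 2 := by intro h; linarith
  have h23 : (3 * (n : ℝ) - 6 - s) / 2 ≠ (n : ℝ) - 2 := by intro h; nlinarith
  have hcount := card_fibers_eq_of_lower_bounds hQ.eigenvalues h12 h13 h23
    (card_pos.mpr ⟨i₁, by simp [hi₁]⟩) (card_pos.mpr ⟨i₂, by simp [hi₂]⟩)
    (by rwa [Fintype.card_fin])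
  rwa [Fintype.card_fin] at hcount
end

section
/- Let G be a simple graph with second largest degree d_2. Then the second largest signless Laplacian eigenvalue satisfies q_2(G) ≥ d_2 - 1. -/
open Finset
open scoped Classical

open Matrix in
lemma key_rayleigh {n : ℕ} {M : Matrix (Fin n) (Fin n) ℝ} (hM : M.IsHermitian)
    (i0 : Fin n) (c lam : ℝ) (hc : ∀ i, i ≠ i0 → hM.eigenvalues i ≤ c)
    (x : Fin n → ℝ)
    (horth : ((star ((hM.eigenvectorUnitary : Matrix.unitaryGroup (Fin n) ℝ) : Matrix (Fin n) (Fin n) ℝ)) *ᵥ x) i0 = 0)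
    (hform : lam * (x ⬝ᵥ x) ≤ x ⬝ᵥ (M *ᵥ x)) (hx : 0 < x ⬝ᵥ x) :
    lam ≤ c := by
  set U : Matrix (Fin n) (Fin n) ℝ := ((hM.eigenvectorUnitary : Matrix.unitaryGroup (Fin n) ℝ) : Matrix (Fin n) (Fin n) ℝ) with hU
  set y : Fin n → ℝ := (star U) *ᵥ x with hy
  have hUT : star U = Uᵀ := by
    ext i j; simp [Matrix.star_apply]
  have hvm : x ᵥ* U = y := by
    rw [hy, hUT, mulVec_transpose]
  have hUy : U *ᵥ y = x := by
    have h1 : U * star U = 1 := Matrix.mem_unitaryGroup_iff.mp hM.eigenvectorUnitary.2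
    rw [hy, mulVec_mulVec, h1, one_mulVec]
  have hdiag : (diagonal (RCLike.ofReal ∘ hM.eigenvalues) : Matrix (Fin n) (Fin n) ℝ)
      = diagonal hM.eigenvalues := rfl
  have hquad : x ⬝ᵥ (M *ᵥ x) = ∑ i, hM.eigenvalues i * (y i * y i) := by
    conv_lhs => rw [hM.spectral_theorem, hdiag, Unitary.conjStarAlgAut_apply, ← hU]
    rw [← Matrix.mulVec_mulVec, ← Matrix.mulVec_mulVec, dotProduct_mulVec, hvm, ← hy]
    simp only [dotProduct, mulVec_diagonal]
    exact Finset.sum_congr rfl fun i _ => by ring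
  have hnorm : x ⬝ᵥ x = ∑ i, y i * y i := by
    calc x ⬝ᵥ x = x ⬝ᵥ (U *ᵥ y) := by rw [hUy]
    _ = (x ᵥ* U) ⬝ᵥ y := dotProduct_mulVec _ _ _
    _ = y ⬝ᵥ y := by rw [hvm]
    _ = ∑ i, y i * y i := rfl
  have hsum : ∑ i, hM.eigenvalues i * (y i * y i) ≤ ∑ i, c * (y i * y i) := by
    apply Finset.sum_le_sum
    intro i _
    by_cases hi : i = i0
    · subst hi
      simp [horth]
    · exact mul_le_mul_of_nonneg_right (hc i hi) (mul_self_nonneg _)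
  have hfin : lam * (x ⬝ᵥ x) ≤ c * (x ⬝ᵥ x) := by
    calc lam * (x ⬝ᵥ x) ≤ x ⬝ᵥ (M *ᵥ x) := hform
    _ = ∑ i, hM.eigenvalues i * (y i * y i) := hquad
    _ ≤ ∑ i, c * (y i * y i) := hsum
    _ = c * ∑ i, y i * y i := by rw [Finset.mul_sum]
    _ = c * (x ⬝ᵥ x) := by rw [hnorm]
  nlinarith

open Matrix in
theorem stmt10 {n : ℕ} (hn : 2 ≤ n) (G : SimpleGraph (Fin n))
    (hQ : (sLap G).IsHermitian)
    (d : Fin n → ℕ) (hd : Antitone d) (σ : Equiv.Perm (Fin n))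
    (hdσ : ∀ i, d i = G.degree (σ i))
    (q : Fin n → ℝ) (hq : Antitone q) (τ : Equiv.Perm (Fin n))
    (hqτ : ∀ i, q i = hQ.eigenvalues (τ i)) :
    (d ⟨1, by omega⟩ : ℝ) - 1 ≤ q ⟨1, by omega⟩ := by
  classical
  have h0n : (0:ℕ) < n := by omega
  have h1n : (1:ℕ) < n := by omega
  set z0 : Fin n := ⟨0, h0n⟩
  set z1 : Fin n := ⟨1, h1n⟩
  set u : Fin n := σ z0 with hu
  set v : Fin n := σ z1 with hv
  have hz01 : z0 ≠ z1 := by simp [z0, z1, Fin.ext_iff]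
  have huv : u ≠ v := fun h => hz01 (σ.injective h)
  set U : Matrix (Fin n) (Fin n) ℝ := ((hQ.eigenvectorUnitary : Matrix.unitaryGroup (Fin n) ℝ) : Matrix (Fin n) (Fin n) ℝ) with hU
  set i0 : Fin n := τ z0 with hi0
  set α : ℝ := (star U) i0 u with hα
  set β : ℝ := (star U) i0 v with hβ
  obtain ⟨a, b, hab, horth0⟩ : ∃ a b : ℝ, 0 < a * a + b * b ∧ a * α + b * β = 0 := by
    by_cases h : α = 0 ∧ β = 0
    · exact ⟨1, 0, by norm_num, by simp [h.1, h.2]⟩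
    · refine ⟨β, -α, ?_, by ring⟩
      rcases not_and_or.mp h with h | h
      · nlinarith [mul_self_nonneg β, mul_self_pos.mpr h]
      · nlinarith [mul_self_nonneg α, mul_self_pos.mpr h]
  set x : Fin n → ℝ := Pi.single u a + Pi.single v b with hx
  -- basic values of x
  have hxu : x u = a := by
    simp [hx, Pi.single_eq_same, Pi.single_eq_of_ne huv]
  have hxv : x v = b := by
    simp [hx, Pi.single_eq_same, Pi.single_eq_of_ne huv.symm]
  -- dot products
  have hxx : x ⬝ᵥ x = a * a + b * b := by
    simp [hx, add_dotProduct, dotProduct_add, dotProduct_single,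
      single_dotProduct, Pi.single_eq_same, Pi.single_eq_of_ne huv,
      Pi.single_eq_of_ne huv.symm, Pi.add_apply]
  have hxxpos : 0 < x ⬝ᵥ x := by rw [hxx]; exact hab
  -- orthogonality to top eigenvector
  have horth : ((star U) *ᵥ x) i0 = 0 := by
    have : (star U) *ᵥ x = (star U) *ᵥ Pi.single u a + (star U) *ᵥ Pi.single v b := by
      rw [hx, Matrix.mulVec_add]
    rw [this]
    simp only [Pi.add_apply, Matrix.mulVec_single, Pi.smul_apply, Matrix.col_apply,
      MulOpposite.smul_eq_mul_unop, MulOpposite.unop_op]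
    rw [← hα, ← hβ]
    linarith [horth0]
  -- entries of the signless Laplacian
  have hQuu : sLap G u u = (G.degree u : ℝ) := by
    simp [sLap, Matrix.add_apply, Matrix.diagonal_apply_eq]
  have hQvv : sLap G v v = (G.degree v : ℝ) := by
    simp [sLap, Matrix.add_apply, Matrix.diagonal_apply_eq]
  have hQuv : sLap G u v = if G.Adj u v then 1 else 0 := by
    simp [sLap, Matrix.add_apply, Matrix.diagonal_apply_ne _ huv]
  have hQvu : sLap G v u = if G.Adj u v then 1 else 0 := by
    simp [sLap, Matrix.add_apply, Matrix.diagonal_apply_ne _ huv.symm, G.adj_comm]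
  -- quadratic form
  have hform0 : x ⬝ᵥ (sLap G *ᵥ x) =
      a * (sLap G u u * a + sLap G u v * b) + b * (sLap G v u * a + sLap G v v * b) := by
    have hmv : sLap G *ᵥ x = sLap G *ᵥ Pi.single u a + sLap G *ᵥ Pi.single v b := by
      rw [hx, Matrix.mulVec_add]
    rw [hx, add_dotProduct, hmv]
    simp only [Matrix.mulVec_single, single_dotProduct, Pi.add_apply, Pi.smul_apply,
      Matrix.col_apply, MulOpposite.smul_eq_mul_unop, MulOpposite.unop_op]
    try ring
  -- degree bounds
  have hdu : (d z1 : ℝ) ≤ (G.degree u : ℝ) := by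
    have h01 : z0 ≤ z1 := by simp [z0, z1, Fin.le_def]
    have := hd h01
    rw [hdσ z0] at this
    exact_mod_cast this
  have hdv : (G.degree v : ℝ) = (d z1 : ℝ) := by rw [hdσ z1]
  have hform : ((d z1 : ℝ) - 1) * (x ⬝ᵥ x) ≤ x ⬝ᵥ (sLap G *ᵥ x) := by
    rw [hform0, hxx, hQuu, hQvv, hQuv, hQvu]
    by_cases hadj : G.Adj u v
    · simp only [hadj, if_true]
      nlinarith [sq_nonneg (a + b), sq_nonneg (a - b)]
    · simp only [hadj, if_false]
      nlinarith [mul_self_nonneg a, mul_self_nonneg b]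
  -- eigenvalue bound away from the top one
  have hc : ∀ i, i ≠ i0 → hQ.eigenvalues i ≤ q z1 := by
    intro i hi
    set j : Fin n := τ.symm i with hj
    have hji : τ j = i := τ.apply_symm_apply i
    have hjne : j ≠ z0 := by
      intro h
      apply hi
      rw [← hji, h, hi0]
    have hle : z1 ≤ j := by
      have hj0 : j.val ≠ 0 := by
        intro h
        exact hjne (Fin.ext h)
      rw [Fin.le_def]
      exact Nat.one_le_iff_ne_zero.mpr hj0
    have := hq hle
    rw [hqτ j, hji] at this
    exact this
  exact key_rayleigh hQ i0 (q z1) ((d z1 : ℝ) - 1) hc x horth hform hxxpos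
end

section
/- Let G be a simple graph and S a set of m > 0 vertices such that each vertex of S has at least e neighbors outside S. Then the m-th largest signless Laplacian eigenvalue of G satisfies q_m(G) ≥ e. -/
open Finset Matrix
open scoped Classical RealInnerProductSpace

lemma quad_ge {n : ℕ} (G : SimpleGraph (Fin n)) (S : Finset (Fin n)) (e : ℕ)
    (hout : ∀ s ∈ S, e ≤ (G.neighborFinset s \ S).card)
    (x : Fin n → ℝ) (hxS : ∀ v ∉ S, x v = 0) :
    (e : ℝ) * (∑ v, x v * x v) ≤ ∑ v, x v * ((sLap G) *ᵥ x) v := by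
  classical
  set A := G.adjMatrix ℝ with hAdef
  have hAnn : ∀ v w, 0 ≤ A v w := by
    intro v w; simp only [hAdef, SimpleGraph.adjMatrix_apply]; split <;> norm_num
  have hAsymm : ∀ v w, A v w = A w v := by
    intro v w; simp [hAdef, SimpleGraph.adjMatrix_apply, G.adj_comm]
  have hdeg : ∀ v, (G.degree v : ℝ) = ∑ w, A v w := by
    intro v
    simp [hAdef, SimpleGraph.adjMatrix_apply, SimpleGraph.degree,
      SimpleGraph.neighborFinset_eq_filter, Finset.sum_boole]
  have hexp : ∑ v, x v * ((sLap G) *ᵥ x) v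
      = ∑ v, ∑ w, A v w * (x v * (x v + x w)) := by
    refine Finset.sum_congr rfl fun v _ => ?_
    have : ((sLap G) *ᵥ x) v = (G.degree v : ℝ) * x v + ∑ w, A v w * x w := by
      simp [sLap, Matrix.mulVec, dotProduct, hAdef, Matrix.add_apply,
        Matrix.diagonal_apply, add_mul, Finset.sum_add_distrib, ite_mul,
        SimpleGraph.adjMatrix_apply, Finset.sum_ite_eq, zero_mul]
    rw [this, hdeg v, Finset.sum_mul, mul_add, Finset.mul_sum, Finset.mul_sum,
      ← Finset.sum_add_distrib]
    exact Finset.sum_congr rfl fun w _ => by ring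
  rw [hexp]
  have hsplit : ∑ v, ∑ w, A v w * (x v * (x v + x w))
      = (∑ v, ∑ w ∈ S, A v w * (x v * (x v + x w)))
        + ∑ v, ∑ w ∈ Sᶜ, A v w * (x v * (x v + x w)) := by
    rw [← Finset.sum_add_distrib]
    exact Finset.sum_congr rfl fun v _ => (Finset.sum_add_sum_compl S _).symm
  rw [hsplit]
  -- inside part is nonnegative
  have hin : 0 ≤ ∑ v, ∑ w ∈ S, A v w * (x v * (x v + x w)) := by
    have hrestr : ∑ v, ∑ w ∈ S, A v w * (x v * (x v + x w))
        = ∑ v ∈ S, ∑ w ∈ S, A v w * (x v * (x v + x w)) := by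
      refine (Finset.sum_subset (Finset.subset_univ S) fun v _ hv => ?_).symm
      simp [hxS v hv]
    set T := ∑ v ∈ S, ∑ w ∈ S, A v w * (x v * (x v + x w)) with hT
    have hT2 : T = ∑ v ∈ S, ∑ w ∈ S, A v w * (x w * (x w + x v)) := by
      rw [hT, Finset.sum_comm]
      exact Finset.sum_congr rfl fun v _ => Finset.sum_congr rfl fun w _ => by
        rw [hAsymm v w]
    have hTT : T + T = ∑ v ∈ S, ∑ w ∈ S, A v w * (x v + x w) ^ 2 := by
      nth_rewrite 2 [hT2]
      rw [hT, ← Finset.sum_add_distrib]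
      refine Finset.sum_congr rfl fun v _ => ?_
      rw [← Finset.sum_add_distrib]
      exact Finset.sum_congr rfl fun w _ => by ring
    have hTTpos : 0 ≤ T + T := by
      rw [hTT]
      exact Finset.sum_nonneg fun v _ => Finset.sum_nonneg fun w _ =>
        mul_nonneg (hAnn v w) (sq_nonneg _)
    rw [hrestr]
    linarith
  -- outside part dominates e * ∑ x v ^ 2
  have hout' : (e : ℝ) * (∑ v, x v * x v)
      ≤ ∑ v, ∑ w ∈ Sᶜ, A v w * (x v * (x v + x w)) := by
    rw [Finset.mul_sum]
    refine Finset.sum_le_sum fun v _ => ?_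
    have hzero : ∀ w ∈ Sᶜ, A v w * (x v * (x v + x w)) = A v w * (x v * x v) := by
      intro w hw
      rw [hxS w (Finset.mem_compl.mp hw), add_zero]
    rw [Finset.sum_congr rfl hzero, ← Finset.sum_mul]
    have hcard : ∑ w ∈ Sᶜ, A v w = ((G.neighborFinset v \ S).card : ℝ) := by
      have : Sᶜ.filter (G.Adj v) = G.neighborFinset v \ S := by
        ext w
        simp [SimpleGraph.mem_neighborFinset, and_comm]
      simp [hAdef, SimpleGraph.adjMatrix_apply, Finset.sum_boole, this]
    rw [hcard]
    by_cases hv : v ∈ S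
    · have := hout v hv
      have hxx : 0 ≤ x v * x v := mul_self_nonneg _
      exact mul_le_mul_of_nonneg_right (by exact_mod_cast this) hxx
    · simp [hxS v hv]
  linarith

theorem stmt11 {n : ℕ} (G : SimpleGraph (Fin n)) (hQ : (sLap G).IsHermitian)
    (S : Finset (Fin n)) (e : ℕ) (hSpos : 0 < S.card)
    (hout : ∀ s ∈ S, e ≤ (G.neighborFinset s \ S).card)
    (q : Fin n → ℝ) (hq : Antitone q) (τ : Equiv.Perm (Fin n))
    (hqτ : ∀ i, q i = hQ.eigenvalues (τ i))
    (h : S.card - 1 < n) :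
    (e : ℝ) ≤ q ⟨S.card - 1, h⟩ := by
  classical
  set g : Fin n → (Fin n → ℝ) := fun j v => hQ.eigenvectorBasis j v with hg
  -- extension-by-zero linear map
  set ext : (↥S → ℝ) →ₗ[ℝ] (Fin n → ℝ) :=
    { toFun := fun y v => if hv : v ∈ S then y ⟨v, hv⟩ else 0
      map_add' := by intro a b; funext v; by_cases hv : v ∈ S <;> simp [hv]
      map_smul' := by intro c a; funext v; by_cases hv : v ∈ S <;> simp [hv] } with hext
  set B : Matrix (Fin (S.card - 1)) (Fin n) ℝ :=
    Matrix.of fun i v => g (τ ⟨i.val, i.isLt.trans h⟩) v with hB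
  set Φ : (↥S → ℝ) →ₗ[ℝ] (Fin (S.card - 1) → ℝ) := B.mulVecLin ∘ₗ ext with hΦ
  have hni : ¬ Function.Injective Φ := by
    intro hinj
    have hle := LinearMap.finrank_le_finrank_of_injective hinj
    rw [Module.finrank_fintype_fun_eq_card, Module.finrank_fintype_fun_eq_card,
      Fintype.card_coe, Fintype.card_fin] at hle
    omega
  obtain ⟨a, b', hab, hne⟩ := Function.not_injective_iff.mp hni
  set y : ↥S → ℝ := a - b' with hy
  have hy0 : Φ y = 0 := by rw [hy, map_sub, hab, sub_self]
  have hyne : y ≠ 0 := sub_ne_zero.mpr hne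
  set x : Fin n → ℝ := ext y with hx
  have hxS : ∀ v ∉ S, x v = 0 := by
    intro v hv; simp [hx, hext, hv]
  have hxne : ∃ v, x v ≠ 0 := by
    obtain ⟨s, hs⟩ := Function.ne_iff.mp hyne
    refine ⟨s.val, ?_⟩
    simpa [hx, hext, s.2] using hs
  -- coefficients in the eigenbasis
  set c : Fin n → ℝ := fun j => ⟪hQ.eigenvectorBasis j, (WithLp.toLp 2 x : EuclideanSpace ℝ (Fin n))⟫ with hc
  have hcsum : ∀ j, c j = ∑ v, g j v * x v := by
    intro j
    simp [hc, PiLp.inner_apply, RCLike.inner_apply, hg]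
    exact Finset.sum_congr rfl fun v _ => mul_comm _ _
  have hc0 : ∀ i : Fin n, i.val < S.card - 1 → c (τ i) = 0 := by
    intro i hi
    have h0 := congrFun hy0 ⟨i.val, hi⟩
    have : τ ⟨(⟨i.val, hi⟩ : Fin (S.card - 1)).val, Fin.isLt _ |>.trans h⟩ = τ i := by
      congr 1
    rw [hcsum]
    simpa [hΦ, hB, Matrix.mulVecLin_apply, Matrix.mulVec, dotProduct, this,
      ← hx] using h0
  -- expansion of x in the eigenbasis
  have hrepr : ∀ v, x v = ∑ j, c j * g j v := by
    intro v
    have h2 : (fun v => x v) = ∑ i, c i • g i := by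
      have := congrArg (WithLp.linearEquiv 2 ℝ (Fin n → ℝ))
        (hQ.eigenvectorBasis.sum_repr' (WithLp.toLp 2 x : EuclideanSpace ℝ (Fin n))).symm
      rw [map_sum] at this
      simpa [hg, hc, map_smul] using this
    rw [show x v = (fun v => x v) v from rfl, h2]
    simp [Finset.sum_apply]
  set N : ℝ := ∑ v, x v * x v with hN
  have hNc : N = ∑ j, c j ^ 2 := by
    calc N = ∑ v, ∑ j, c j * (g j v * x v) := by
          refine Finset.sum_congr rfl fun v _ => ?_
          nth_rewrite 1 [hrepr v]
          rw [Finset.sum_mul]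
          exact Finset.sum_congr rfl fun j _ => by ring
      _ = ∑ j, c j * ∑ v, g j v * x v := by
          rw [Finset.sum_comm]
          exact Finset.sum_congr rfl fun j _ => by rw [Finset.mul_sum]
      _ = ∑ j, c j ^ 2 := by
          exact Finset.sum_congr rfl fun j _ => by rw [← hcsum j]; ring
  have hNpos : 0 < N := by
    obtain ⟨v, hv⟩ := hxne
    exact Finset.sum_pos' (fun w _ => mul_self_nonneg _)
      ⟨v, Finset.mem_univ v, mul_self_pos.mpr hv⟩
  -- the quadratic form in the eigenbasis
  have hxfun : x = ∑ j, c j • g j := by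
    funext v; rw [hrepr v]; simp [Finset.sum_apply]
  have hQform : ∑ v, x v * ((sLap G) *ᵥ x) v = ∑ j, hQ.eigenvalues j * c j ^ 2 := by
    have hmv : (sLap G) *ᵥ x = ∑ j, (c j * hQ.eigenvalues j) • g j := by
      rw [hxfun, ← Matrix.mulVecLin_apply, map_sum]
      refine Finset.sum_congr rfl fun j _ => ?_
      rw [_root_.map_smul, Matrix.mulVecLin_apply,
        show (sLap G) *ᵥ g j = hQ.eigenvalues j • g j from hQ.mulVec_eigenvectorBasis j,
        smul_smul, mul_comm]
    calc ∑ v, x v * ((sLap G) *ᵥ x) v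
        = ∑ v, ∑ j, (c j * hQ.eigenvalues j) * (g j v * x v) := by
          refine Finset.sum_congr rfl fun v _ => ?_
          rw [hmv]
          rw [show (∑ j, (c j * hQ.eigenvalues j) • g j) v
            = ∑ j, (c j * hQ.eigenvalues j) * g j v by simp [Finset.sum_apply]]
          rw [Finset.mul_sum]
          exact Finset.sum_congr rfl fun j _ => by ring
      _ = ∑ j, (c j * hQ.eigenvalues j) * ∑ v, g j v * x v := by
          rw [Finset.sum_comm]
          exact Finset.sum_congr rfl fun j _ => by rw [Finset.mul_sum]
      _ = ∑ j, hQ.eigenvalues j * c j ^ 2 := by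
          exact Finset.sum_congr rfl fun j _ => by rw [← hcsum j]; ring
  -- lower bound from combinatorics
  have hlow : (e : ℝ) * N ≤ ∑ j, hQ.eigenvalues j * c j ^ 2 := by
    rw [← hQform]; exact quad_ge G S e hout x hxS
  -- upper bound from eigenvalue ordering
  have hupper : ∑ j, hQ.eigenvalues j * c j ^ 2 ≤ q ⟨S.card - 1, h⟩ * N := by
    have h1 : ∑ j, hQ.eigenvalues j * c j ^ 2 = ∑ i, q i * c (τ i) ^ 2 := by
      rw [← Equiv.sum_comp τ (fun j => hQ.eigenvalues j * c j ^ 2)]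
      exact Finset.sum_congr rfl fun i _ => by rw [hqτ i]
    rw [h1]
    have h2 : ∑ i, q i * c (τ i) ^ 2 ≤ ∑ i, q ⟨S.card - 1, h⟩ * c (τ i) ^ 2 := by
      refine Finset.sum_le_sum fun i _ => ?_
      by_cases hi : i.val < S.card - 1
      · rw [hc0 i hi]; simp
      · exact mul_le_mul_of_nonneg_right
          (hq (show (⟨S.card - 1, h⟩ : Fin n) ≤ i from not_lt.mp hi)) (sq_nonneg _)
    have h3 : ∑ i, q ⟨S.card - 1, h⟩ * c (τ i) ^ 2 = q ⟨S.card - 1, h⟩ * N := by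
      rw [← Finset.mul_sum, Equiv.sum_comp τ (fun j => c j ^ 2), ← hNc]
    linarith
  have := hlow.trans hupper
  exact le_of_mul_le_mul_right this hNpos
end

section
/- Let G be a simple graph of order n with exactly one vertex of minimum degree (so d_{n-1} > d_n). Then the number of signless Laplacian eigenvalues of G in [d_{n-1}, 2n-2] is at least α(G) - 1, where α(G) is the independence number. -/
open Finset
open scoped Classical

section Aux
open Matrix
open scoped RealInnerProductSpace


lemma starMulVec {n : ℕ} (U : Matrix (Fin n) (Fin n) ℝ) (y : Fin n → ℝ) :
    star U *ᵥ y = y ᵥ* U := by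
  funext i
  simp [Matrix.mulVec, Matrix.vecMul, dotProduct, Matrix.star_apply, mul_comm]

lemma eig_le_of_form {n : ℕ} {M : Matrix (Fin n) (Fin n) ℝ} (hM : M.IsHermitian) (B : ℝ)
    (hform : ∀ y : Fin n → ℝ, y ⬝ᵥ (M *ᵥ y) ≤ B * ∑ v, (y v)^2) (i : Fin n) :
    hM.eigenvalues i ≤ B := by
  have h1 : hM.eigenvalues i
      = (hM.eigenvectorBasis i : Fin n → ℝ) ⬝ᵥ (M *ᵥ (hM.eigenvectorBasis i : Fin n → ℝ)) := by
    simpa using hM.eigenvalues_eq i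
  have h2 : ∑ v, (hM.eigenvectorBasis i v)^2 = 1 := by
    have h := hM.eigenvectorBasis.orthonormal.1 i
    have h2 : ⟪hM.eigenvectorBasis i, hM.eigenvectorBasis i⟫ = 1 := by
      rw [real_inner_self_eq_norm_sq, h]; norm_num
    rw [PiLp.inner_apply] at h2
    simpa [sq] using h2
  calc hM.eigenvalues i = _ := h1
    _ ≤ B * ∑ v, (hM.eigenvectorBasis i v)^2 := hform _
    _ = B := by rw [h2, mul_one]

lemma keyCount {n : ℕ} {M : Matrix (Fin n) (Fin n) ℝ} (hM : M.IsHermitian) (t : ℝ)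
    (S' : Finset (Fin n))
    (hform : ∀ y : Fin n → ℝ, (∀ v, v ∉ S' → y v = 0) →
      t * ∑ v, (y v)^2 ≤ y ⬝ᵥ (M *ᵥ y)) :
    S'.card ≤ (Finset.univ.filter fun i => t ≤ hM.eigenvalues i).card := by
  set T : Finset (Fin n) := Finset.univ.filter fun i => t ≤ hM.eigenvalues i with hT
  set U : Matrix (Fin n) (Fin n) ℝ := (hM.eigenvectorUnitary : Matrix (Fin n) (Fin n) ℝ) with hU
  have hU1 : U * star U = 1 := (Matrix.mem_unitaryGroup_iff).mp hM.eigenvectorUnitary.2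
  -- extension by zero
  let E : ({v // v ∈ S'} → ℝ) →ₗ[ℝ] (Fin n → ℝ) :=
    { toFun := fun x v => if h : v ∈ S' then x ⟨v, h⟩ else 0
      map_add' := by intro a b; funext v; by_cases h : v ∈ S' <;> simp [h]
      map_smul' := by intro c a; funext v; by_cases h : v ∈ S' <;> simp [h] }
  let C : (Fin n → ℝ) →ₗ[ℝ] (Fin n → ℝ) := Matrix.mulVecLin (star U)
  let R : (Fin n → ℝ) →ₗ[ℝ] ({i // i ∈ T} → ℝ) :=
    LinearMap.funLeft ℝ ℝ (fun i : {i // i ∈ T} => (i : Fin n))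
  have hinj : Function.Injective (R ∘ₗ C ∘ₗ E) := by
    rw [← LinearMap.ker_eq_bot, LinearMap.ker_eq_bot']
    intro x hx
    set y : Fin n → ℝ := E x with hy
    set c : Fin n → ℝ := star U *ᵥ y with hc
    have hsupp : ∀ v, v ∉ S' → y v = 0 := by
      intro v hv; simp only [hy]; simp [E, hv]
    have hcT : ∀ i ∈ T, c i = 0 := by
      intro i hi
      have := congrFun hx ⟨i, hi⟩
      simpa [R, C, E, hc, hy, Matrix.mulVecLin] using this
    have hvm : y ᵥ* U = c := (starMulVec U y).symm
    have hyc : U *ᵥ c = y := by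
      rw [hc, Matrix.mulVec_mulVec, hU1, Matrix.one_mulVec]
    have h1 : y ⬝ᵥ (M *ᵥ y) = ∑ i, hM.eigenvalues i * (c i)^2 := by
      conv_lhs => rw [hM.spectral_theorem, Unitary.conjStarAlgAut_apply]
      rw [← Matrix.mulVec_mulVec, ← Matrix.mulVec_mulVec, Matrix.dotProduct_mulVec, hvm]
      have : (RCLike.ofReal ∘ hM.eigenvalues : Fin n → ℝ) = hM.eigenvalues := rfl
      rw [this]
      simp only [dotProduct, Matrix.mulVec_diagonal, hc]
      ring_nf
      congr 1; funext i; ring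
    have h2 : ∑ v, (y v)^2 = ∑ i, (c i)^2 := by
      have : y ⬝ᵥ y = c ⬝ᵥ c := by
        nth_rewrite 2 [← hyc]
        rw [Matrix.dotProduct_mulVec, hvm]
      simpa [dotProduct, sq] using this
    have h3 : t * ∑ i, (c i)^2 ≤ ∑ i, hM.eigenvalues i * (c i)^2 := by
      rw [← h1, ← h2]; exact hform y hsupp
    have hc0 : c = 0 := by
      by_contra hne
      obtain ⟨j, hj⟩ := Function.ne_iff.mp hne
      have hjT : j ∉ T := by
        intro hjT; exact hj (hcT j hjT)
      have hsplit : ∀ i, hM.eigenvalues i * (c i)^2 ≤ t * (c i)^2 := by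
        intro i
        by_cases hi : i ∈ T
        · rw [hcT i hi]; simp
        · have : hM.eigenvalues i < t := by
            by_contra h; exact hi (by simp [hT, not_lt.mp (by simpa using h)])
          nlinarith [sq_nonneg (c i)]
      have hjlt : hM.eigenvalues j * (c j)^2 < t * (c j)^2 := by
        have hlt : hM.eigenvalues j < t := by
          by_contra h; exact hjT (by simp [hT, not_lt.mp (by simpa using h)])
        have : 0 < (c j)^2 := (sq_nonneg _).lt_of_ne (Ne.symm (pow_ne_zero 2 hj))
        nlinarith [this]
      have : ∑ i, hM.eigenvalues i * (c i)^2 < ∑ i, t * (c i)^2 :=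
        Finset.sum_lt_sum (fun i _ => hsplit i) ⟨j, Finset.mem_univ j, hjlt⟩
      rw [← Finset.mul_sum] at this
      linarith
    have hy0 : y = 0 := by rw [← hyc, hc0, Matrix.mulVec_zero]
    funext v
    have := congrFun hy0 (v : Fin n)
    simpa [hy, E, v.2] using this
  have := LinearMap.finrank_le_finrank_of_injective hinj
  simpa [Module.finrank_pi] using this


lemma sLap_form {n : ℕ} (G : SimpleGraph (Fin n)) (y : Fin n → ℝ) :
    y ⬝ᵥ (sLap G *ᵥ y)
      = ∑ v, (G.degree v : ℝ) * (y v)^2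
        + ∑ v, ∑ u, (G.adjMatrix ℝ) v u * (y v * y u) := by
  rw [sLap, Matrix.add_mulVec, dotProduct_add]
  congr 1
  · simp only [dotProduct, Matrix.mulVec_diagonal]
    congr 1; funext v; ring
  · simp only [dotProduct, Matrix.mulVec, Finset.mul_sum]
    congr 1; funext v
    congr 1; funext u; ring

lemma adj_row_sum {n : ℕ} (G : SimpleGraph (Fin n)) (v : Fin n) :
    ∑ u, (G.adjMatrix ℝ) v u = (G.degree v : ℝ) := by
  simp [SimpleGraph.adjMatrix, SimpleGraph.degree, SimpleGraph.neighborFinset_eq_filter]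

lemma sLap_form_le {n : ℕ} (G : SimpleGraph (Fin n)) (y : Fin n → ℝ) :
    y ⬝ᵥ (sLap G *ᵥ y) ≤ 2 * ∑ v, (G.degree v : ℝ) * (y v)^2 := by
  rw [sLap_form]
  have h : ∑ v, ∑ u, (G.adjMatrix ℝ) v u * (y v * y u)
      ≤ ∑ v, ∑ u, (G.adjMatrix ℝ) v u * (((y v)^2 + (y u)^2)/2) := by
    refine Finset.sum_le_sum fun v _ => Finset.sum_le_sum fun u _ => ?_
    by_cases hadj : G.Adj v u
    · simp only [SimpleGraph.adjMatrix_apply, if_pos hadj]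
      nlinarith [sq_nonneg (y v - y u)]
    · simp [hadj]
  have h2 : ∑ v, ∑ u, (G.adjMatrix ℝ) v u * (((y v)^2 + (y u)^2)/2)
      = ∑ v, (G.degree v : ℝ) * (y v)^2 := by
    have e1 : ∀ v u, (G.adjMatrix ℝ) v u * (((y v)^2 + (y u)^2)/2)
        = (G.adjMatrix ℝ) v u * (y v)^2 / 2 + (G.adjMatrix ℝ) v u * (y u)^2 / 2 := by
      intro v u; ring
    simp only [e1, Finset.sum_add_distrib]
    have e2 : ∑ v, ∑ u, (G.adjMatrix ℝ) v u * (y v)^2 / 2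
        = ∑ v, (G.degree v : ℝ) * (y v)^2 / 2 := by
      refine Finset.sum_congr rfl fun v _ => ?_
      rw [← Finset.sum_div, ← Finset.sum_mul, adj_row_sum]
    have e3 : ∑ v, ∑ u, (G.adjMatrix ℝ) v u * (y u)^2 / 2
        = ∑ u, (G.degree u : ℝ) * (y u)^2 / 2 := by
      rw [Finset.sum_comm]
      refine Finset.sum_congr rfl fun u _ => ?_
      rw [← Finset.sum_div, ← Finset.sum_mul]
      congr 2
      rw [← adj_row_sum G u]
      exact Finset.sum_congr rfl fun v _ => by
        rw [Matrix.IsSymm.apply (SimpleGraph.isSymm_adjMatrix G)]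
    rw [e2, e3, ← Finset.sum_add_distrib]
    exact Finset.sum_congr rfl fun v _ => by ring
  linarith [h, h2.le, h2.ge]


end Aux

open Matrix in
set_option maxHeartbeats 1000000 in
theorem stmt12 {n : ℕ} (hn : 2 ≤ n) (G : SimpleGraph (Fin n))
    (hQ : (sLap G).IsHermitian)
    (d : Fin n → ℕ) (hd : Antitone d) (σ : Equiv.Perm (Fin n))
    (hdσ : ∀ i, d i = G.degree (σ i))
    (huniq : d ⟨n - 1, by omega⟩ < d ⟨n - 2, by omega⟩)
    (S : Finset (Fin n)) (hS : ∀ a ∈ S, ∀ b ∈ S, ¬ G.Adj a b) :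
    S.card - 1 ≤ eigCount hQ (Set.Icc (d ⟨n - 2, by omega⟩ : ℝ) (2 * n - 2)) := by
  set t : ℝ := (d ⟨n - 2, by omega⟩ : ℝ) with ht
  set w : Fin n := σ ⟨n - 1, by omega⟩ with hw
  set S' : Finset (Fin n) := S.erase w with hS'
  -- degree lower bound off the minimum-degree vertex
  have hdeg : ∀ v : Fin n, v ≠ w → t ≤ (G.degree v : ℝ) := by
    intro v hv
    have hvi : σ (σ.symm v) = v := σ.apply_symm_apply v
    have hne : σ.symm v ≠ ⟨n - 1, by omega⟩ := by
      intro h; apply hv; rw [← hvi, h]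
    have hle : σ.symm v ≤ ⟨n - 2, by omega⟩ := by
      rw [Fin.le_def]
      have h1 : (σ.symm v : ℕ) < n := (σ.symm v).2
      have h2 : (σ.symm v : ℕ) ≠ n - 1 := by
        intro h; apply hne; exact Fin.ext h
      simp only [Fin.val_mk]; omega
    have := hd hle
    rw [hdσ (σ.symm v), hvi] at this
    rw [ht]
    exact_mod_cast this
  -- degrees are at most n - 1
  have hdegle : ∀ v : Fin n, (G.degree v : ℝ) ≤ (n : ℝ) - 1 := by
    intro v
    have h1 : G.degree v < n := by
      simpa using G.degree_lt_card_verts v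
    have : (G.degree v : ℝ) + 1 ≤ (n : ℝ) := by exact_mod_cast h1
    linarith
  -- upper bound on the quadratic form
  have hformU : ∀ y : Fin n → ℝ, y ⬝ᵥ (sLap G *ᵥ y) ≤ (2 * (n : ℝ) - 2) * ∑ v, (y v)^2 := by
    intro y
    refine (sLap_form_le G y).trans ?_
    rw [Finset.mul_sum, Finset.mul_sum]
    refine Finset.sum_le_sum fun v _ => ?_
    have := hdegle v
    nlinarith [sq_nonneg (y v)]
  have heigle : ∀ i, hQ.eigenvalues i ≤ 2 * (n : ℝ) - 2 :=
    eig_le_of_form hQ _ hformU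
  -- the eigenvalue count as a one-sided count
  have hset2 : eigCount hQ (Set.Icc t (2 * (n : ℝ) - 2))
      = (Finset.univ.filter fun i => t ≤ hQ.eigenvalues i).card := by
    rw [eigCount]
    congr 1
    ext i
    simp only [Finset.mem_filter, Set.mem_Icc]
    exact ⟨fun h => ⟨h.1, h.2.1⟩, fun h => ⟨h.1, h.2, heigle i⟩⟩
  -- lower bound on the quadratic form on the independent set
  have hformL : ∀ y : Fin n → ℝ, (∀ v, v ∉ S' → y v = 0) →
      t * ∑ v, (y v)^2 ≤ y ⬝ᵥ (sLap G *ᵥ y) := by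
    intro y hsupp
    have hmem : ∀ v, y v ≠ 0 → v ∈ S' := fun v h => by
      by_contra hv; exact h (hsupp v hv)
    rw [sLap_form]
    have hcross : ∑ v, ∑ u, (G.adjMatrix ℝ) v u * (y v * y u) = 0 := by
      refine Finset.sum_eq_zero fun v _ => Finset.sum_eq_zero fun u _ => ?_
      by_cases hyv : y v = 0
      · rw [hyv]; ring
      by_cases hyu : y u = 0
      · rw [hyu]; ring
      have hvS : v ∈ S := Finset.mem_of_mem_erase (hmem v hyv)
      have huS : u ∈ S := Finset.mem_of_mem_erase (hmem u hyu)
      have : ¬ G.Adj v u := hS v hvS u huS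
      simp [this]
    rw [hcross, add_zero, Finset.mul_sum]
    refine Finset.sum_le_sum fun v _ => ?_
    by_cases hyv : y v = 0
    · rw [hyv]; ring_nf; rfl
    · have hv : v ∈ S' := hmem v hyv
      have hvw : v ≠ w := Finset.ne_of_mem_erase hv
      exact mul_le_mul_of_nonneg_right (hdeg v hvw) (sq_nonneg _)
  have hkey := keyCount hQ t S' hformL
  have hcard : S.card - 1 ≤ S'.card := Finset.pred_card_le_card_erase
  calc S.card - 1 ≤ S'.card := hcard
    _ ≤ (Finset.univ.filter fun i => t ≤ hQ.eigenvalues i).card := hkey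
    _ = eigCount hQ (Set.Icc t (2 * (n : ℝ) - 2)) := hset2.symm
end
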